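/- arXiv:0902.4107 — 10 statements merged into one kernel-verified Lean document; each statement's English description precedes it below -/
import Mathlib

section
/- Let V be a Hilbert C*-module over a C*-algebra A. A subset Q ⊆ V is bounded with respect to the topology τ_{V̂} (generated by the seminorms μ_z(x) = ‖⟨z,x⟩‖, z ∈ V) if and only if Q is bounded in norm. -/
open Filter Topology Pointwise

/-- The December 2024 Mathlib `CStarModule` (right module via `SMul Aᵐᵒᵖ E`), kept with its
old meaning since Mathlib's `CStarModule` now describes left modules (`SMul A E`). -/
class CStarModuleOld (A E : Type*) [NonUnitalSemiring A] [StarRing A] [Module ℂ A]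
    [AddCommGroup E] [Module ℂ E] [PartialOrder A] [SMul Aᵐᵒᵖ E] [Norm A] [Norm E]
    extends Inner A E where
  inner_add_right {x} {y} {z} : inner x (y + z) = inner x y + inner x z
  inner_self_nonneg {x} : 0 ≤ inner x x
  inner_self {x} : inner x x = 0 ↔ x = 0
  inner_op_smul_right {a : A} {x y : E} : inner x (MulOpposite.op a • y) = inner x y * a
  inner_smul_right_complex {z : ℂ} {x} {y} : inner x (z • y) = z • inner x y
  star_inner x y : star (inner x y) = inner y x
  norm_eq_sqrt_norm_inner_self x : ‖x‖ = √‖inner x x‖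

variable (A E : Type*) [NonUnitalCStarAlgebra A] [PartialOrder A] [StarOrderedRing A]
  [NormedAddCommGroup E] [NormedSpace ℂ E] [SMul Aᵐᵒᵖ E] [CStarModuleOld A E]

/-- The weak module topology `τ_V̂` on a Hilbert C*-module `E`, generated by the seminorms
`x ↦ ‖⟪z, x⟫‖` for `z ∈ E`; equivalently, the initial topology of the family of linear maps
`x ↦ ⟪z, x⟫` into `A`. -/
noncomputable def tauHat : TopologicalSpace E :=
  ⨅ z : E, TopologicalSpace.induced (fun x : E => (inner A z x : A)) inferInstance

variable {A E}

/-! If `Q` is `τ_V̂`-bounded, every functional `x ↦ ⟪z, x⟫` is bounded on `Q`. Each `x ∈ Q` is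
itself the bounded conjugate-linear map `z ↦ ⟪z, x⟫`, whose norm dominates `‖x‖` since
`‖x‖² = ‖⟪x, x⟫‖`; the uniform boundedness principle turns the pointwise bounds into a bound on
`‖x‖`. Conversely, by Cauchy–Schwarz `τ_V̂` is coarser than the norm topology, so norm-bounded sets
are `τ_V̂`-bounded. -/

lemma exists_pos_forall_lt_subset_smul_of_absorbs {M : Type*} [SMul ℝ M] {U Q : Set M}
    (h : Absorbs ℝ U Q) : ∃ s : ℝ, 0 < s ∧ ∀ t : ℝ, s < t → Q ⊆ t • U := by
  obtain ⟨r, hr⟩ := absorbs_iff_norm.mp h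
  refine ⟨max r 1, by positivity, fun t ht => hr t ?_⟩
  exact (le_max_left r 1).trans (ht.le.trans (Real.le_norm_self t))

namespace CStarModuleOld

section Algebraic

variable {A E : Type*} [NonUnitalRing A] [StarRing A] [Module ℂ A] [PartialOrder A] [Norm A]
  [AddCommGroup E] [Module ℂ E] [SMul Aᵐᵒᵖ E] [Norm E] [CStarModuleOld A E]

lemma inner_add_left {x y z : E} : inner A (x + y) z = inner A x z + inner A y z := by
  rw [← star_inner, inner_add_right, star_add, star_inner, star_inner]

lemma inner_op_smul_left {a : A} {x y : E} :
    inner A (MulOpposite.op a • x) y = star a * inner A x y := by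
  rw [← star_inner, inner_op_smul_right, star_mul, star_inner]

lemma inner_smul_right_real {r : ℝ} {x y : E} : inner A x (r • y) = r • inner A x y := by
  rw [← Complex.coe_smul, inner_smul_right_complex, Complex.coe_smul]

variable [StarModule ℂ A]

lemma inner_smul_left_complex {z : ℂ} {x y : E} : inner A (z • x) y = star z • inner A x y := by
  rw [← star_inner, inner_smul_right_complex, star_smul, star_inner]

lemma inner_smul_left_real {r : ℝ} {x y : E} : inner A (r • x) y = r • inner A x y := by
  rw [← Complex.coe_smul, inner_smul_left_complex, Complex.star_def, Complex.conj_ofReal,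
    Complex.coe_smul]

variable (A E) in
noncomputable def innerₛₗ : E →ₗ⋆[ℂ] E →ₗ[ℂ] A where
  toFun x :=
    { toFun := inner A x
      map_add' _ _ := inner_add_right
      map_smul' _ _ := inner_smul_right_complex }
  map_add' _ _ := LinearMap.ext fun _ => inner_add_left
  map_smul' _ _ := LinearMap.ext fun _ => inner_smul_left_complex

lemma innerₛₗ_apply {x y : E} : innerₛₗ A E x y = inner A x y := rfl

lemma inner_zero_left {y : E} : inner A (0 : E) y = 0 := by
  rw [← innerₛₗ_apply, map_zero, LinearMap.zero_apply]

lemma inner_zero_right {x : E} : inner A x (0 : E) = 0 := by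
  rw [← innerₛₗ_apply, map_zero]

lemma inner_sub_left {x y z : E} : inner A (x - y) z = inner A x z - inner A y z := by
  rw [← innerₛₗ_apply, map_sub, LinearMap.sub_apply, innerₛₗ_apply, innerₛₗ_apply]

lemma inner_sub_right {x y z : E} : inner A x (y - z) = inner A x y - inner A x z := by
  rw [← innerₛₗ_apply, map_sub, innerₛₗ_apply, innerₛₗ_apply]

end Algebraic

section Normed

variable {A E : Type*} [NonUnitalCStarAlgebra A] [PartialOrder A]
  [NormedAddCommGroup E] [NormedSpace ℂ E] [SMul Aᵐᵒᵖ E] [CStarModuleOld A E]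

variable (A) in
lemma norm_sq_eq {x : E} : ‖x‖ ^ 2 = ‖inner A x x‖ := by
  rw [norm_eq_sqrt_norm_inner_self (A := A), Real.sq_sqrt (norm_nonneg _)]

lemma continuous_inner_tauHat (z : E) : Continuous[tauHat A E, _] (inner A z) :=
  continuous_iInf_dom continuous_induced_dom

lemma exists_norm_inner_le_of_absorbs_tauHat {Q : Set E}
    (hQ : ∀ U ∈ @nhds E (tauHat A E) 0, ∃ s : ℝ, 0 < s ∧ ∀ t : ℝ, s < t → Q ⊆ t • U) (z : E) :
    ∃ C : ℝ, ∀ x ∈ Q, ‖inner A z x‖ ≤ C := by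
  have hU : inner A z ⁻¹' Metric.ball 0 1 ∈ @nhds E (tauHat A E) 0 :=
    @Continuous.continuousAt _ _ (tauHat A E) _ _ 0 (continuous_inner_tauHat z) _ (by
      rw [inner_zero_right]
      exact Metric.ball_mem_nhds 0 one_pos)
  obtain ⟨s, hs, hQU⟩ := hQ _ hU
  refine ⟨s + 1, fun x hx => ?_⟩
  obtain ⟨u, hu, rfl⟩ := hQU (s + 1) (lt_add_one s) hx
  rw [inner_smul_right_real, norm_smul, Real.norm_of_nonneg (by positivity)]
  exact mul_le_of_le_one_right (by positivity) (mem_ball_zero_iff.mp hu).le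

end Normed

lemma inner_mul_inner_swap_le {x y : E} :
    inner A y x * inner A x y ≤ ‖x‖ ^ 2 • inner A y y := by
  rcases eq_or_ne x 0 with rfl | hx
  · simp [inner_zero_left, inner_zero_right]
  -- expand `0 ≤ ⟪x a - ‖x‖² y, x a - ‖x‖² y⟫`, then take `a = ⟪x, y⟫`
  have key : ∀ a : A, (0 : A) ≤ ‖x‖ ^ 2 • (star a * a) - ‖x‖ ^ 2 • (star a * inner A x y)
      - ‖x‖ ^ 2 • (inner A y x * a) + ‖x‖ ^ 2 • (‖x‖ ^ 2 • inner A y y) := fun a =>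
    calc (0 : A)
        ≤ inner A (MulOpposite.op a • x - ‖x‖ ^ 2 • y) (MulOpposite.op a • x - ‖x‖ ^ 2 • y) :=
          inner_self_nonneg
      _ = star a * inner A x x * a - ‖x‖ ^ 2 • (star a * inner A x y)
            - ‖x‖ ^ 2 • (inner A y x * a) + ‖x‖ ^ 2 • (‖x‖ ^ 2 • inner A y y) := by
          simp only [inner_sub_right, inner_op_smul_right, inner_sub_left, inner_op_smul_left,
            inner_smul_left_real, inner_smul_right_real, smul_sub, sub_mul, mul_assoc,
            smul_mul_assoc]
          abel
      _ ≤ _ := by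
          gcongr
          calc _ ≤ ‖inner A x x‖ • (star a * a) :=
                CStarAlgebra.star_left_conjugate_le_norm_smul (hb := star_inner x x)
            _ = ‖x‖ ^ 2 • (star a * a) := by rw [norm_sq_eq A]
  have h := key (inner A x y)
  simp only [star_inner, sub_self, zero_sub, le_neg_add_iff_add_le, add_zero] at h
  rwa [smul_le_smul_iff_of_pos_left (pow_pos (norm_pos_iff.mpr hx) _)] at h

lemma norm_inner_le {x y : E} : ‖inner A x y‖ ≤ ‖x‖ * ‖y‖ := by
  have hsq : ‖inner A x y‖ ^ 2 ≤ (‖x‖ * ‖y‖) ^ 2 :=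
    calc ‖inner A x y‖ ^ 2 = ‖inner A y x * inner A x y‖ := by
          rw [← star_inner x, CStarRing.norm_star_mul_self, pow_two]
      _ ≤ ‖‖x‖ ^ 2 • inner A y y‖ := by
          refine CStarAlgebra.norm_le_norm_of_nonneg_of_le ?_ inner_mul_inner_swap_le
          rw [← star_inner x]
          exact star_mul_self_nonneg _
      _ = (‖x‖ * ‖y‖) ^ 2 := by
          rw [norm_smul, norm_pow, norm_norm, ← norm_sq_eq A, mul_pow]
  exact (pow_le_pow_iff_left₀ (norm_nonneg _) (by positivity) two_ne_zero).mp hsq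

variable (A E) in
noncomputable def innerSL : E →L⋆[ℂ] E →L[ℂ] A :=
  LinearMap.mkContinuous₂ (innerₛₗ A E) 1 fun x y => by
    rw [one_mul]
    exact norm_inner_le

lemma norm_le_opNorm_innerSL_flip (x : E) : ‖x‖ ≤ ‖(innerSL A E).flip x‖ := by
  rcases (norm_nonneg x).eq_or_lt with hx | hx
  · exact hx ▸ norm_nonneg _
  refine le_of_mul_le_mul_right ?_ hx
  calc ‖x‖ * ‖x‖ = ‖(innerSL A E).flip x x‖ := by rw [← sq, norm_sq_eq A]; rfl
    _ ≤ ‖(innerSL A E).flip x‖ * ‖x‖ := ((innerSL A E).flip x).le_opNorm x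

lemma exists_norm_le_of_forall_exists_norm_inner_le [CompleteSpace E] {Q : Set E}
    (h : ∀ z : E, ∃ C : ℝ, ∀ x ∈ Q, ‖inner A z x‖ ≤ C) : ∃ C : ℝ, ∀ x ∈ Q, ‖x‖ ≤ C := by
  obtain ⟨C, hC⟩ := banach_steinhaus (g := fun x : Q => (innerSL A E).flip (x : E)) fun z => by
    obtain ⟨C, hC⟩ := h z
    exact ⟨C, fun x => hC x x.2⟩
  exact ⟨C, fun x hx => (norm_le_opNorm_innerSL_flip x).trans (hC ⟨x, hx⟩)⟩

end CStarModuleOld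

open CStarModuleOld

lemma tauHat_le_norm_topology : (inferInstance : TopologicalSpace E) ≤ tauHat A E :=
  le_iInf fun z => continuous_iff_le_induced.mp (innerSL A E z).continuous

/-- A subset `Q` of a Hilbert C*-module `E` is von Neumann bounded for the weak module
topology `τ_V̂` if and only if it is bounded in norm. -/
theorem tauHat_bounded_iff_norm_bounded [CompleteSpace E] (Q : Set E) :
    (∀ U : Set E, U ∈ @nhds E (tauHat A E) 0 →
      ∃ s : ℝ, 0 < s ∧ ∀ t : ℝ, s < t → Q ⊆ (t • U : Set E)) ↔
    ∃ C : ℝ, ∀ x ∈ Q, ‖x‖ ≤ C := by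
  refine ⟨fun hQ => exists_norm_le_of_forall_exists_norm_inner_le
    (exists_norm_inner_le_of_absorbs_tauHat hQ), fun hQ U hU => ?_⟩
  have hQ_vonN : Bornology.IsVonNBounded ℝ Q :=
    (NormedSpace.isVonNBounded_iff ℝ).mpr (isBounded_iff_forall_norm_le.mpr hQ)
  exact exists_pos_forall_lt_subset_smul_of_absorbs (hQ_vonN (nhds_mono tauHat_le_norm_topology hU))
end

section
/- Let A be a unital C*-algebra and V = ℓ²(A) the standard Hilbert A-module. If the topologies τ_{V̂} and τ_{V'} coincide on V, then V is self-dual (equivalently, A is finite-dimensional). -/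
open Filter Topology

variable (A : Type*) [CStarAlgebra A]

/-- The standard Hilbert module `ℓ²(A)` over a C*-algebra `A`: sequences `(a i)` in `A`
such that `∑ (a i)* (a i)` converges in norm. -/
def StdMod : Type _ := {a : ℕ → A // Summable fun i => star (a i) * a i}

/-- The `A`-valued inner product on `ℓ²(A)`: `⟪x, y⟫ = ∑' i, (x i)* (y i)`. -/
noncomputable def stdInner (x y : StdMod A) : A := ∑' i, star (x.1 i) * y.1 i

/-- The weak module topology `τ_V̂` on `ℓ²(A)`, generated by the seminorms
`x ↦ ‖⟪z, x⟫‖` for `z ∈ ℓ²(A)`. -/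
noncomputable def tauHatStd : TopologicalSpace (StdMod A) :=
  ⨅ z : StdMod A, TopologicalSpace.induced (fun x : StdMod A => stdInner A z x) inferInstance

/-- For unital `A`, the dual module `ℓ²(A)'` is identified with the set of sequences `(b i)`
in `A` whose partial sums of `∑ (b i)* (b i)` are uniformly bounded. -/
def StdDual : Type _ :=
  {b : ℕ → A // ∃ C : ℝ, ∀ n : ℕ, ‖∑ i ∈ Finset.range n, star (b i) * b i‖ ≤ C}

/-- The weak module topology `τ_V'` on `ℓ²(A)`, generated by the seminorms
`x ↦ ‖f(x)‖` for `f` in the dual module `ℓ²(A)' `. -/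
noncomputable def tauDualStd : TopologicalSpace (StdMod A) :=
  ⨅ f : StdDual A, TopologicalSpace.induced
    (fun x : StdMod A => ∑' i, star (f.1 i) * x.1 i) inferInstance

/-!
The functional `x ↦ ∑ (f i)* x i` of a sequence `f` with bounded partial sums of `∑ (f i)* f i`
is `τ_V'`-continuous, hence `τ_V̂`-continuous. On the truncations of `f` to finite index sets far
out, it takes the tail sums of `∑ (f i)* f i` as values, whereas by Cauchy–Schwarz every `⟪z, ·⟫`
is small there. So the tails of `∑ (f i)* f i` are small, and `f ∈ ℓ²(A)`.

If `A` is infinite-dimensional, it contains pairwise orthogonal self-adjoint elements `e n` of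
norm one; the partial sums of `∑ (e n)* e n` are then bounded by `1` while its terms have norm `1`.
If some self-adjoint element has infinite spectrum, bump functions with disjoint supports give the
`e n` by functional calculus. Otherwise every corner `p A q` between minimal projections is at most
one-dimensional, so `1` is not a finite sum of orthogonal minimal projections. It would be if
projections satisfied the descending chain condition; hence there is an infinite strictly
descending chain of projections, and its successive differences are the `e n`.
-/

open Function

variable {A}

def Finset.tailFilter (ι : Type*) : Filter (Finset ι) := ⨅ s : Finset ι, 𝓟 {t | Disjoint t s}

lemma Finset.hasBasis_tailFilter (ι : Type*) :
    (Finset.tailFilter ι).HasBasis (fun _ => True) fun s => {t | Disjoint t s} := by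
  classical
  refine hasBasis_iInf_principal fun s₁ s₂ => ⟨s₁ ∪ s₂, ?_, ?_⟩ <;>
    intro t (ht : Disjoint t (s₁ ∪ s₂)) <;> simp_all [Finset.disjoint_union_right]

lemma summable_iff_tendsto_tailFilter {ι E : Type*} [NormedAddCommGroup E] [CompleteSpace E]
    {g : ι → E} : Summable g ↔ Tendsto (fun t => ∑ i ∈ t, g i) (Finset.tailFilter ι) (𝓝 0) := by
  rw [summable_iff_vanishing_norm,
    (Finset.hasBasis_tailFilter ι).tendsto_iff Metric.nhds_basis_ball]
  simp


open scoped InnerProductSpace in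
lemma norm_sum_star_mul_sq_le {ι : Type*} (s : Finset ι) (a b : ι → A) :
    ‖∑ i ∈ s, star (a i) * b i‖ ^ 2 ≤
      ‖∑ i ∈ s, star (a i) * a i‖ * ‖∑ i ∈ s, star (b i) * b i‖ := by
  let _ := CStarAlgebra.spectralOrder A
  have _ := CStarAlgebra.spectralOrderedRing A
  let emb (c : ι → A) : WithCStarModule A (s → A) :=
    (WithCStarModule.equiv A (s → A)).symm fun i => star (c i)
  have inner_emb (c d : ι → A) : ⟪emb c, emb d⟫_A = ∑ i ∈ s, star (d i) * c i := by
    simp [WithCStarModule.pi_inner, WithCStarModule.inner_def, emb,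
      ← Finset.sum_coe_sort s fun i => star (d i) * c i]
  have norm_emb (c : ι → A) : ‖emb c‖ ^ 2 = ‖∑ i ∈ s, star (c i) * c i‖ := by
    rw [CStarModule.norm_sq_eq (A := A), inner_emb]
  have hcs := CStarModule.norm_inner_le (A := A) _ (x := emb b) (y := emb a)
  rw [inner_emb] at hcs
  calc _ ≤ (‖emb b‖ * ‖emb a‖) ^ 2 := by gcongr
    _ = _ := by rw [mul_pow, norm_emb, norm_emb, mul_comm]

lemma norm_sum_star_mul_self_le_of_subset {ι : Type*} {s t : Finset ι} (hst : s ⊆ t) (f : ι → A) :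
    ‖∑ i ∈ s, star (f i) * f i‖ ≤ ‖∑ i ∈ t, star (f i) * f i‖ := by
  let _ := CStarAlgebra.spectralOrder A
  have _ := CStarAlgebra.spectralOrderedRing A
  exact CStarAlgebra.norm_le_norm_of_nonneg_of_le
    (Finset.sum_nonneg fun i _ => star_mul_self_nonneg _)
    (Finset.sum_le_sum_of_subset_of_nonneg hst fun i _ _ => star_mul_self_nonneg _)

lemma norm_sum_star_mul_self_le_of_forall_range {f : ℕ → A} {C : ℝ}
    (hC : ∀ n, ‖∑ i ∈ Finset.range n, star (f i) * f i‖ ≤ C) (t : Finset ℕ) :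
    ‖∑ i ∈ t, star (f i) * f i‖ ≤ C := by
  obtain ⟨n, hn⟩ := t.exists_nat_subset_range
  exact (norm_sum_star_mul_self_le_of_subset hn f).trans (hC n)

lemma tendsto_sum_star_mul_tailFilter {z f : ℕ → A} (hz : Summable fun i => star (z i) * z i)
    {C : ℝ} (hC : ∀ n, ‖∑ i ∈ Finset.range n, star (f i) * f i‖ ≤ C) :
    Tendsto (fun t => ∑ i ∈ t, star (z i) * f i) (Finset.tailFilter ℕ) (𝓝 0) := by
  have hz' := summable_iff_tendsto_tailFilter.mp hz
  have hbound : Tendsto (fun t => √(‖∑ i ∈ t, star (z i) * z i‖ * C))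
      (Finset.tailFilter ℕ) (𝓝 0) := by
    simpa using (hz'.norm.mul_const C).sqrt
  refine squeeze_zero_norm (fun t => ?_) hbound
  refine Real.le_sqrt_of_sq_le ((norm_sum_star_mul_sq_le t z f).trans ?_)
  exact mul_le_mul_of_nonneg_left (norm_sum_star_mul_self_le_of_forall_range hC t) (norm_nonneg _)

noncomputable def StdMod.ofFinset (f : ℕ → A) (t : Finset ℕ) : StdMod A :=
  ⟨(t : Set ℕ).indicator f, summable_of_ne_finset_zero (s := t) fun i hi => by simp [hi]⟩

lemma tsum_star_mul_ofFinset (g f : ℕ → A) (t : Finset ℕ) :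
    ∑' i, star (g i) * (StdMod.ofFinset f t).1 i = ∑ i ∈ t, star (g i) * f i := by
  rw [tsum_eq_sum (s := t) fun i hi => by simp [StdMod.ofFinset, hi]]
  exact Finset.sum_congr rfl fun i hi => by simp [StdMod.ofFinset, hi]

lemma tendsto_tauHatStd_iff {ι : Type*} {l : Filter ι} {x : ι → StdMod A} {y : StdMod A} :
    Tendsto x l (@nhds _ (tauHatStd A) y) ↔
      ∀ z, Tendsto (fun i => stdInner A z (x i)) l (𝓝 (stdInner A z y)) := by
  rw [tauHatStd, nhds_iInf, tendsto_iInf]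
  simp only [nhds_induced, tendsto_comap_iff, Function.comp_def]

lemma continuous_tauDualStd_apply (f : StdDual A) :
    Continuous[tauDualStd A, _] fun x : StdMod A => ∑' i, star (f.1 i) * x.1 i :=
  continuous_iInf_dom continuous_induced_dom

theorem summable_of_tauHatStd_eq_tauDualStd (h : tauHatStd A = tauDualStd A) (f : StdDual A) :
    Summable fun i => star (f.1 i) * f.1 i := by
  obtain ⟨C, hC⟩ := f.2
  -- `StdMod A` has no `0`; the empty truncation plays its role
  have hx : Tendsto (StdMod.ofFinset f.1) (Finset.tailFilter ℕ)
      (@nhds _ (tauHatStd A) (StdMod.ofFinset f.1 ∅)) := by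
    refine tendsto_tauHatStd_iff.mpr fun z => ?_
    simpa [stdInner, tsum_star_mul_ofFinset] using tendsto_sum_star_mul_tailFilter z.2 hC
  have hφ := continuous_tauDualStd_apply f
  rw [← h] at hφ
  rw [summable_iff_tendsto_tailFilter]
  simpa [Function.comp_def, tsum_star_mul_ofFinset]
    using (@Continuous.tendsto _ _ (tauHatStd A) _ _ hφ _).comp hx

lemma norm_sum_star_mul_self_le_one {ι : Type*} {e : ι → A}
    (horth : Pairwise fun i j => e i * e j = 0) (hsa : ∀ i, IsSelfAdjoint (e i))
    (hnorm : ∀ i, ‖e i‖ ≤ 1) (s : Finset ι) : ‖∑ i ∈ s, star (e i) * e i‖ ≤ 1 := by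
  let _ := CStarAlgebra.spectralOrder A
  have _ := CStarAlgebra.spectralOrderedRing A
  set S := ∑ i ∈ s, star (e i) * e i
  have hSsa : IsSelfAdjoint S := .of_nonneg (Finset.sum_nonneg fun i _ => star_mul_self_nonneg _)
  have hsq (i : ι) : star (e i) * e i * (star (e i) * e i) ≤ star (e i) * e i := by
    have hle : star (e i) * e i ≤ 1 := by
      rw [← CStarAlgebra.norm_le_one_iff_of_nonneg _ (star_mul_self_nonneg _),
        CStarRing.norm_star_mul_self]
      exact mul_le_one₀ (hnorm i) (norm_nonneg _) (hnorm i)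
    simpa [(hsa i).star_eq, mul_assoc] using (hsa i).conjugate_le_conjugate hle
  have hSS : S * S ≤ S := calc
    S * S = ∑ i ∈ s, star (e i) * e i * (star (e i) * e i) := by
      rw [Finset.sum_mul_sum]
      refine Finset.sum_congr rfl fun i hi => Finset.sum_eq_single_of_mem i hi fun j _ hji => ?_
      rw [mul_assoc, ← mul_assoc (e i), (hsa j).star_eq, horth hji.symm, zero_mul, mul_zero]
    _ ≤ S := Finset.sum_le_sum fun i _ => hsq i
  have hnormSS : ‖S‖ ^ 2 ≤ ‖S‖ := by
    rw [← hSsa.norm_mul_self]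
    refine CStarAlgebra.norm_le_norm_of_nonneg_of_le ?_ hSS
    simpa [hSsa.star_eq] using star_mul_self_nonneg S
  nlinarith [norm_nonneg S]

lemma Set.Infinite.exists_pairwise_disjoint_isOpen {α : Type*} [LinearOrder α] [TopologicalSpace α]
    [OrderTopology α] {S : Set α} (hS : S.Infinite) :
    ∃ U : ℕ → Set α, (∀ n, IsOpen (U n)) ∧ Pairwise (Disjoint on U) ∧ ∀ n, (S ∩ U n).Nonempty := by
  have := hS.to_subtype
  obtain ⟨t, ht | ht⟩ := Infinite.exists_strictMono_or_strictAnti S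
  · refine ⟨fun n => Ioo (t (2 * n)) (t (2 * (n + 1))), fun n => isOpen_Ioo, ?_, fun n => ?_⟩
    · exact Monotone.pairwise_disjoint_on_Ioo_succ (f := fun n => (t (2 * n) : α))
        fun m n h => ht.monotone (by omega)
    · exact ⟨t (2 * n + 1), (t _).2, ht (by omega), ht (by omega)⟩
  · refine ⟨fun n => Ioo (t (2 * (n + 1))) (t (2 * n)), fun n => isOpen_Ioo, ?_, fun n => ?_⟩
    · exact Antitone.pairwise_disjoint_on_Ioo_succ (f := fun n => (t (2 * n) : α))
        fun m n h => ht.antitone (by omega)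
    · exact ⟨t (2 * n + 1), (t _).2, ht (by omega), ht (by omega)⟩

lemma exists_orthogonal_seq_of_infinite_spectrum [Nontrivial A] {a : A} (ha : IsSelfAdjoint a)
    (hinf : (spectrum ℝ a).Infinite) :
    ∃ e : ℕ → A, Pairwise (fun i j => e i * e j = 0) ∧ ∀ n, IsSelfAdjoint (e n) ∧ ‖e n‖ = 1 := by
  obtain ⟨U, hU, hdisj, hmem⟩ := hinf.exists_pairwise_disjoint_isOpen
  choose s hs using hmem
  have hbump (n : ℕ) := exists_continuous_zero_one_of_isClosed (hU n).isClosed_compl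
    isClosed_singleton (Set.disjoint_singleton_right.mpr fun h => h (hs n).2)
  choose g hg0 hg1 hg01 using hbump
  refine ⟨fun n => cfc (g n) a, fun i j hij => ?_, fun n => ⟨cfc_predicate _ _, ?_⟩⟩
  · dsimp only
    rw [← cfc_mul (g i) (g j) a, ← cfc_zero ℝ a]
    refine cfc_congr fun x _ => ?_
    by_cases hx : x ∈ U i
    · simp [hg0 j (Set.disjoint_left.mp (hdisj hij) hx)]
    · simp [hg0 i hx]
  · refine le_antisymm (norm_cfc_le zero_le_one fun x _ => ?_) ?_
    · rw [Real.norm_of_nonneg (hg01 n x).1]; exact (hg01 n x).2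
    · have h1 : (1 : ℝ) ∈ spectrum ℝ (cfc (g n) a) := by
        rw [cfc_map_spectrum (g n) a]
        exact ⟨s n, (hs n).1, hg1 n rfl⟩
      simpa using spectrum.norm_le_norm_of_mem h1

lemma IsStarProjection.norm_eq_one {p : A} (hp : IsStarProjection p) (hp0 : p ≠ 0) : ‖p‖ = 1 := by
  have h : ‖p‖ * ‖p‖ = ‖p‖ := by
    rw [← CStarRing.norm_star_mul_self, hp.isSelfAdjoint.star_eq, hp.isIdempotentElem.eq]
  have : ‖p‖ ≠ 0 := norm_ne_zero_iff.mpr hp0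
  exact (mul_eq_left₀ this).mp h

lemma isStarProjection_sum {F : Finset A} (hF : ∀ p ∈ F, IsStarProjection p)
    (horth : (F : Set A).Pairwise fun p q => p * q = 0) : IsStarProjection (∑ p ∈ F, p) := by
  classical
  induction F using Finset.induction_on with
  | empty => simp [IsStarProjection.zero]
  | insert a s ha ih =>
    rw [Finset.sum_insert ha]
    refine (hF a (s.mem_insert_self a)).add (ih (fun p hp => hF p (Finset.mem_insert_of_mem hp))
      (horth.mono (by simp))) ?_
    rw [Finset.mul_sum]
    exact Finset.sum_eq_zero fun q hq => horth (by simp) (by simp [hq])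
      (fun h => ha (h ▸ hq))

lemma sum_mul_eq_self_of_mem {F : Finset A} {q : A} (hq : q ∈ F) (hproj : IsStarProjection q)
    (horth : (F : Set A).Pairwise fun p q => p * q = 0) : (∑ p ∈ F, p) * q = q := by
  rw [Finset.sum_mul, Finset.sum_eq_single_of_mem q hq fun p hp hpq => horth hp hq hpq]
  exact hproj.isIdempotentElem.eq

lemma Set.WellFoundedOn.exists_minimal_le {α : Type*} [Preorder α] {P : α → Prop}
    (hwf : {x | P x}.WellFoundedOn (· < ·)) {x : α} (hx : P x) : ∃ y, Minimal P y ∧ y ≤ x := by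
  obtain ⟨y, hy⟩ := (hwf.subset (s := {y | P y ∧ y ≤ x}) fun y hy => hy.1).exists_minimal
    ⟨x, hx, le_rfl⟩
  exact ⟨y, ⟨hy.1.1, fun z hz hzy => hy.2 ⟨hz, hzy.trans hy.1.2⟩ hzy⟩, hy.1.2⟩

section Projections

variable [PartialOrder A] [StarOrderedRing A]

abbrev IsMinimalProjection (p : A) : Prop := Minimal (fun q => IsStarProjection q ∧ q ≠ 0) p

lemma exists_orthogonal_seq_of_not_wellFoundedOn
    (h : ¬ {p : A | IsStarProjection p}.WellFoundedOn (· < ·)) :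
    ∃ e : ℕ → A, Pairwise (fun i j => e i * e j = 0) ∧ ∀ n, IsSelfAdjoint (e n) ∧ ‖e n‖ = 1 := by
  rw [Set.wellFoundedOn_iff_no_descending_seq] at h
  push Not at h
  obtain ⟨f, hf⟩ := h
  have hanti : StrictAnti f := fun m n hmn => f.map_rel_iff.mpr hmn
  have hle {m n : ℕ} (hmn : m ≤ n) : f n ≤ f m := hanti.antitone hmn
  have hmul_left {m n : ℕ} (hmn : m ≤ n) : f m * f n = f n :=
    ((hf n).le_iff_mul_eq_right (hf m)).mp (hle hmn)
  have hmul_right {m n : ℕ} (hmn : m ≤ n) : f n * f m = f n :=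
    ((hf n).le_iff_mul_eq_left (hf m)).mp (hle hmn)
  refine ⟨fun n => f n - f (n + 1), fun i j hij => ?_, fun n => ?_⟩
  · rcases hij.lt_or_gt with h | h
    · simp only [sub_mul, mul_sub, hmul_left h.le, hmul_left (h.le.trans j.le_succ),
        hmul_left (Nat.succ_le_of_lt h), hmul_left (Nat.succ_le_of_lt h |>.trans j.le_succ)]
      abel
    · simp only [sub_mul, mul_sub, hmul_right h.le, hmul_right (h.le.trans i.le_succ),
        hmul_right (Nat.succ_le_of_lt h), hmul_right (Nat.succ_le_of_lt h |>.trans i.le_succ)]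
      abel
  · have hd := (hf (n + 1)).sub_of_mul_eq_left (hf n) (hmul_right n.le_succ)
    exact ⟨hd.isSelfAdjoint, hd.norm_eq_one (sub_ne_zero.mpr (hanti n.lt_succ_self).ne')⟩

lemma exists_finset_minimal_sum_eq_one
    (hwf : {p : A | IsStarProjection p}.WellFoundedOn (· < ·)) :
    ∃ F : Finset A, (∀ p ∈ F, IsMinimalProjection p) ∧
      (F : Set A).Pairwise (fun p q => p * q = 0) ∧ ∑ p ∈ F, p = 1 := by
  classical
  set Good : Finset A → Prop := fun F => (∀ p ∈ F, IsMinimalProjection p) ∧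
      (F : Set A).Pairwise (fun p q => p * q = 0)
  have hproj {F : Finset A} (hF : Good F) : IsStarProjection (1 - ∑ p ∈ F, p) :=
    (isStarProjection_sum (fun p hp => (hF.1 p hp).prop.1) hF.2).one_sub
  -- a family with minimal complement `1 - ∑ F` exhausts `1`: otherwise a minimal projection
  -- below the complement could be added to it
  obtain ⟨_, hmin⟩ := (hwf.subset (s := {x | ∃ F, Good F ∧ 1 - ∑ p ∈ F, p = x})
    fun _ ⟨F, hF, hx⟩ => hx ▸ hproj hF).exists_minimal ⟨1, ∅, by simp [Good]⟩
  obtain ⟨F, hF, rfl⟩ := hmin.prop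
  refine ⟨F, hF.1, hF.2, ?_⟩
  by_contra hne
  obtain ⟨r, hr, hrle⟩ := (hwf.subset fun q hq => hq.1).exists_minimal_le
    (P := fun q => IsStarProjection q ∧ q ≠ 0) ⟨hproj hF, sub_ne_zero.mpr (Ne.symm hne)⟩
  have hrF : r * ∑ p ∈ F, p = 0 := by
    have := ((hr.prop.1.le_iff_mul_eq_left (hproj hF)).mp hrle)
    rwa [mul_sub, mul_one, sub_eq_self] at this
  have hr_orth (q : A) (hq : q ∈ F) : r * q = 0 := by
    rw [← sum_mul_eq_self_of_mem hq (hF.1 q hq).prop.1 hF.2, ← mul_assoc, hrF, zero_mul]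
  have hrF' : r ∉ F := fun h =>
    hr.prop.2 (by simpa [hr.prop.1.isIdempotentElem.eq] using hr_orth r h)
  have hgood : Good (insert r F) := by
    refine ⟨fun p hp => ?_, ?_⟩
    · rcases Finset.mem_insert.mp hp with rfl | hp
      exacts [hr, hF.1 p hp]
    · rw [Finset.coe_insert, Set.pairwise_insert]
      refine ⟨hF.2, fun q hq _ => ⟨hr_orth q hq, ?_⟩⟩
      simpa [(hF.1 q hq).prop.1.isSelfAdjoint.star_eq, hr.prop.1.isSelfAdjoint.star_eq]
        using congr_arg star (hr_orth q hq)
  have hlt : 1 - ∑ p ∈ insert r F, p < 1 - ∑ p ∈ F, p := by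
    rw [Finset.sum_insert hrF', sub_add_eq_sub_sub_swap, sub_lt_self_iff]
    exact hr.prop.1.nonneg.lt_of_ne (Ne.symm hr.prop.2)
  exact hmin.not_lt ⟨_, hgood, rfl⟩ hlt

variable [Nontrivial A]

lemma IsMinimalProjection.exists_real_smul_eq_mul_mul {p : A}
    (hp : IsMinimalProjection p)
    (hspec : ∀ a : A, IsSelfAdjoint a → (spectrum ℝ a).Finite) {y : A} (hy : IsSelfAdjoint y) :
    ∃ c : ℝ, p * y * p = c • p := by
  have hpp : p * p = p := hp.prop.1.isIdempotentElem.eq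
  set z := p * y * p
  have hzsa : IsSelfAdjoint z := by simpa [hp.prop.1.isSelfAdjoint.star_eq] using hy.conjugate p
  have hpz : p * z = z := by simp only [z, ← mul_assoc, hpp]
  have hzp : z * p = z := by simp only [z, mul_assoc, hpp]
  by_cases hz : spectrum ℝ z ⊆ {0}
  · exact ⟨0, by rw [zero_smul]; exact CFC.eq_zero_of_spectrum_subset_zero z hz⟩
  obtain ⟨l, hl, hl0⟩ : ∃ l ∈ spectrum ℝ z, l ≠ 0 := by simpa [Set.subset_def] using hz
  -- the spectral projection of `z` at the isolated point `l` lies below `p`, hence equals `p`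
  set χ : ℝ → ℝ := fun t => if t = l then 1 else 0
  have hχ : ContinuousOn χ (spectrum ℝ z) := (hspec z hzsa).continuousOn χ
  set q := cfc χ z
  have hq : IsStarProjection q := by
    refine isStarProjection_iff_spectrum_subset_and_isSelfAdjoint.mpr ⟨?_, cfc_predicate χ z⟩
    rw [cfc_map_spectrum χ z]
    rintro _ ⟨t, -, rfl⟩
    by_cases ht : t = l <;> simp [χ, ht]
  have hq0 : q ≠ 0 := by
    intro h
    have h1 : (1 : ℝ) ∈ spectrum ℝ q := by
      rw [cfc_map_spectrum χ z]
      exact ⟨l, hl, by simp [χ]⟩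
    simp [h, spectrum.zero_eq] at h1
  have hzq : z * q = l • q := calc
    z * q = cfc (fun t => t * χ t) z := by rw [cfc_mul (fun t => t) χ z, cfc_id' ℝ z]
    _ = cfc (fun t => l * χ t) z := cfc_congr fun t _ => by by_cases ht : t = l <;> simp [χ, ht]
    _ = l • q := cfc_const_mul l χ z
  have hpq : p * q = q := by
    have hq_eq : q = l⁻¹ • (z * q) := by rw [hzq, smul_smul, inv_mul_cancel₀ hl0, one_smul]
    rw [hq_eq, mul_smul_comm, ← mul_assoc, hpz]
  have hqp : q = p := hp.eq_of_le ⟨hq, hq0⟩ ((hq.le_iff_mul_eq_right hp.prop.1).mpr hpq)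
  exact ⟨l, by rw [← hzp, ← hqp, hzq]⟩

lemma IsMinimalProjection.exists_smul_eq_mul_mul {p : A}
    (hp : IsMinimalProjection p)
    (hspec : ∀ a : A, IsSelfAdjoint a → (spectrum ℝ a).Finite) (x : A) :
    ∃ c : ℂ, p * x * p = c • p := by
  obtain ⟨c₁, hc₁⟩ := hp.exists_real_smul_eq_mul_mul hspec (realPart x).2
  obtain ⟨c₂, hc₂⟩ := hp.exists_real_smul_eq_mul_mul hspec (imaginaryPart x).2
  refine ⟨c₁ + Complex.I * c₂, ?_⟩
  conv_lhs => rw [← realPart_add_I_smul_imaginaryPart x]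
  rw [mul_add, add_mul, mul_smul_comm, smul_mul_assoc, hc₁, hc₂, add_smul, mul_smul]
  simp [Complex.coe_smul]

lemma exists_mem_span_mul_mul {p q : A} (hp : IsMinimalProjection p)
    (hq : IsMinimalProjection q)
    (hspec : ∀ a : A, IsSelfAdjoint a → (spectrum ℝ a).Finite) :
    ∃ v : A, ∀ x, p * x * q ∈ ℂ ∙ v := by
  by_cases hzero : ∀ u, p * u * q = 0
  · exact ⟨0, fun x => by simp [hzero x]⟩
  push Not at hzero
  obtain ⟨u, hv⟩ := hzero
  set v := p * u * q
  have hpp : p * p = p := hp.prop.1.isIdempotentElem.eq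
  have hqq : q * q = q := hq.prop.1.isIdempotentElem.eq
  have hps : star p = p := hp.prop.1.isSelfAdjoint.star_eq
  have hqs : star q = q := hq.prop.1.isSelfAdjoint.star_eq
  refine ⟨v, fun x => Submodule.mem_span_singleton.mpr ?_⟩
  -- both `v * star v ∈ p A p` and `star v * (p x q) ∈ q A q` are scalar multiples of `p`, `q`
  obtain ⟨γ, hγ⟩ := hp.exists_smul_eq_mul_mul hspec (u * q * star u)
  obtain ⟨c, hc⟩ := hq.exists_smul_eq_mul_mul hspec (star u * p * x)
  have hvv : v * star v = γ • p := by
    rw [← hγ]; simp only [v, star_mul, hps, hqs, mul_assoc]; rw [← mul_assoc q q, hqq]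
  have hvw : star v * (p * x * q) = c • q := by
    rw [← hc]; simp only [v, star_mul, hps, hqs, mul_assoc]; rw [← mul_assoc p p, hpp]
  have hγ0 : γ ≠ 0 := by
    rintro rfl
    rw [zero_smul, CStarRing.mul_star_self_eq_zero_iff] at hvv
    exact hv hvv
  refine ⟨γ⁻¹ * c, ?_⟩
  have : γ • (p * x * q) = c • v := calc
    γ • (p * x * q) = (γ • p) * (p * x * q) := by simp only [smul_mul_assoc, ← mul_assoc, hpp]
    _ = v * (star v * (p * x * q)) := by rw [← hvv, mul_assoc]
    _ = c • v := by rw [hvw, mul_smul_comm, mul_assoc, hqq]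
  rw [mul_smul, ← this, smul_smul, inv_mul_cancel₀ hγ0, one_smul]

theorem finiteDimensional_of_finite_spectrum_of_wellFoundedOn
    (hspec : ∀ a : A, IsSelfAdjoint a → (spectrum ℝ a).Finite)
    (hwf : {p : A | IsStarProjection p}.WellFoundedOn (· < ·)) : FiniteDimensional ℂ A := by
  classical
  obtain ⟨F, hFmin, -, hFsum⟩ := exists_finset_minimal_sum_eq_one hwf
  have hv (pq : A × A) (hpq : pq ∈ F ×ˢ F) : ∃ v : A, ∀ x, pq.1 * x * pq.2 ∈ ℂ ∙ v :=
    exists_mem_span_mul_mul (hFmin _ (Finset.mem_product.mp hpq).1)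
      (hFmin _ (Finset.mem_product.mp hpq).2) hspec
  choose! v hv using hv
  refine ⟨⟨(F ×ˢ F).image v, eq_top_iff.mpr fun x _ => ?_⟩⟩
  have hx : x = ∑ p ∈ F, ∑ q ∈ F, p * x * q := by
    conv_lhs => rw [← one_mul x, ← mul_one (1 * x), ← hFsum]
    rw [Finset.sum_mul, Finset.sum_mul]
    simp only [Finset.mul_sum]
  rw [hx]
  refine Submodule.sum_mem _ fun p hp => Submodule.sum_mem _ fun q hq => ?_
  have hpq : (p, q) ∈ F ×ˢ F := Finset.mem_product.mpr ⟨hp, hq⟩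
  refine Submodule.span_mono ?_ (hv (p, q) hpq x)
  simpa using Finset.mem_image_of_mem v hpq

end Projections

theorem exists_orthogonal_seq_of_not_finiteDimensional (h : ¬ FiniteDimensional ℂ A) :
    ∃ e : ℕ → A, Pairwise (fun i j => e i * e j = 0) ∧ ∀ n, IsSelfAdjoint (e n) ∧ ‖e n‖ = 1 := by
  let _ := CStarAlgebra.spectralOrder A
  have _ := CStarAlgebra.spectralOrderedRing A
  have : Nontrivial A := not_subsingleton_iff_nontrivial.mp fun _ => h inferInstance
  by_cases hspec : ∀ a : A, IsSelfAdjoint a → (spectrum ℝ a).Finite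
  · by_cases hwf : {p : A | IsStarProjection p}.WellFoundedOn (· < ·)
    · exact absurd (finiteDimensional_of_finite_spectrum_of_wellFoundedOn hspec hwf) h
    · exact exists_orthogonal_seq_of_not_wellFoundedOn hwf
  · push Not at hspec
    obtain ⟨a, ha, hinf⟩ := hspec
    exact exists_orthogonal_seq_of_infinite_spectrum ha hinf

/-- If the topologies `τ_V̂` and `τ_V'` coincide on the standard Hilbert module `V = ℓ²(A)`
over a unital C*-algebra `A`, then `V` is self-dual (every bounded `A`-linear functional,
i.e. every sequence with uniformly bounded partial sums of `∑ b_i* b_i`, actually lies in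
`ℓ²(A)`), and `A` is finite-dimensional. -/
theorem stdMod_selfDual_of_topologies_coincide (h : tauHatStd A = tauDualStd A) :
    (∀ f : StdDual A, Summable fun i => star (f.1 i) * f.1 i) ∧ FiniteDimensional ℂ A := by
  have hselfDual := summable_of_tauHatStd_eq_tauDualStd h
  refine ⟨hselfDual, by_contra fun hA => ?_⟩
  obtain ⟨e, horth, he⟩ := exists_orthogonal_seq_of_not_finiteDimensional hA
  have hsum := hselfDual ⟨e, 1, fun n => norm_sum_star_mul_self_le_one horth
    (fun i => (he i).1) (fun i => (he i).2.le) _⟩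
  have : Tendsto (fun n => ‖star (e n) * e n‖) atTop (𝓝 0) := by
    simpa using hsum.tendsto_atTop_zero.norm
  simp [CStarRing.norm_star_mul_self, (he _).2] at this
end

section
/- In the commutative C*-algebra A = C₀(0,1], viewed as a Hilbert A-module over itself with inner product ⟨f,g⟩ = f̄g, there exists a sequence {f_n} such that ‖g·f_n‖ → 0 for every g ∈ A (τ_{V̂}-convergence to zero) but ‖f_n‖ = 1 for all n; hence C₀(0,1] does not have the module Schur property. -/
open Filter Topology ZeroAtInfty Set Asymptotics

/-!
The tent `f n` of height one supported in `[0, 1/(n+1)]` has norm one. A compact subset of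
`(0,1]` stays away from `0`, so it is eventually disjoint from the supports of the `f n`; off a
compact set an element `g` of `C₀((0,1], ℂ)` is uniformly small, hence `‖g * f n‖ → 0`.
-/

namespace ZeroAtInftyContinuousMap

variable {α β : Type*} [TopologicalSpace α]

section Seminormed

variable [SeminormedAddCommGroup β]

theorem norm_apply_le (f : C₀(α, β)) (x : α) : ‖f x‖ ≤ ‖f‖ :=
  f.toBCF.norm_coe_le_norm x

theorem norm_le {f : C₀(α, β)} {C : ℝ} (hC : 0 ≤ C) :
    ‖f‖ ≤ C ↔ ∀ x, ‖f x‖ ≤ C :=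
  BoundedContinuousFunction.norm_le hC

end Seminormed

theorem isLittleO_mul_of_eventually_eqOn_zero {ι : Type*} [NonUnitalNormedRing β]
    {l : Filter ι} (g : C₀(α, β)) {f : ι → C₀(α, β)}
    (hf : ∀ K, IsCompact K → ∀ᶠ i in l, EqOn (f i) 0 K) :
    (fun i => g * f i) =o[l] f := by
  refine isLittleO_iff.mpr fun c hc => ?_
  obtain ⟨K, hK, hgK⟩ := mem_cocompact.mp
    ((tendsto_zero_iff_norm_tendsto_zero.mp g.zero_at_infty').eventually (gt_mem_nhds hc))
  filter_upwards [hf K hK] with i hi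
  refine (norm_le (by positivity)).mpr fun x => ?_
  rw [mul_apply]
  by_cases hx : x ∈ K
  · rw [hi hx, Pi.zero_apply, mul_zero, norm_zero]
    positivity
  · calc ‖g x * f i x‖ ≤ ‖g x‖ * ‖f i x‖ := norm_mul_le _ _
      _ ≤ c * ‖f i‖ :=
        mul_le_mul (le_of_lt (hgK hx)) (norm_apply_le _ _) (norm_nonneg _) hc.le

end ZeroAtInftyContinuousMap

theorem IsCompact.exists_gt_forall_le_of_subset_Ioi {α : Type*} [LinearOrder α]
    [TopologicalSpace α] [ClosedIicTopology α] [NoMaxOrder α] {a : α} {s : Set α}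
    (hs : IsCompact s) (hsa : s ⊆ Ioi a) : ∃ δ, a < δ ∧ ∀ x ∈ s, δ ≤ x := by
  rcases s.eq_empty_or_nonempty with rfl | hne
  · obtain ⟨δ, hδ⟩ := exists_gt a
    exact ⟨δ, hδ, by simp⟩
  · obtain ⟨m, hm, hmin⟩ := hs.exists_isLeast hne
    exact ⟨m, hsa hm, hmin⟩

theorem exists_gt_forall_le_of_isCompact_Ioc {a b : ℝ} {K : Set (Ioc a b)} (hK : IsCompact K) :
    ∃ δ, a < δ ∧ ∀ x ∈ K, δ ≤ (x : ℝ) := by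
  obtain ⟨δ, haδ, hδ⟩ := (hK.image continuous_subtype_val).exists_gt_forall_le_of_subset_Ioi
    (by rintro _ ⟨x, -, rfl⟩; exact x.2.1)
  exact ⟨δ, haδ, fun x hx => hδ _ (mem_image_of_mem _ hx)⟩

theorem tendsto_subtype_val_cocompact_Ioc (a b : ℝ) :
    Tendsto (Subtype.val : Ioc a b → ℝ) (cocompact _) (𝓝 a) := by
  rw [hasBasis_cocompact.tendsto_iff Metric.nhds_basis_ball]
  intro ε hε
  refine ⟨Subtype.val ⁻¹' Icc (a + ε) b, ?_, fun x hx => ?_⟩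
  · rw [Subtype.isCompact_iff, Subtype.image_preimage_coe,
      inter_eq_right.mpr (Icc_subset_Ioc (by linarith) le_rfl)]
    exact isCompact_Icc
  · have hxε : (x : ℝ) < a + ε := by
      by_contra! h
      exact hx ⟨h, x.2.2⟩
    rw [Metric.mem_ball, Real.dist_eq, abs_of_pos (sub_pos.mpr x.2.1)]
    linarith

def ContinuousMap.restrictIoc {β : Type*} [TopologicalSpace β] [Zero β] {a : ℝ} (b : ℝ)
    (φ : C(ℝ, β)) (hφ : φ a = 0) : C₀(Ioc a b, β) where
  toFun x := φ x
  continuous_toFun := φ.continuous.comp continuous_subtype_val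
  zero_at_infty' := hφ ▸ (φ.continuous.tendsto a).comp (tendsto_subtype_val_cocompact_Ioc a b)

noncomputable def tent (r x : ℝ) : ℝ := max 0 (1 - |2 * x / r - 1|)

theorem continuous_tent (r : ℝ) : Continuous (tent r) := by
  unfold tent; fun_prop

theorem tent_apply_zero (r : ℝ) : tent r 0 = 0 := by
  simp [tent]

theorem tent_nonneg (r x : ℝ) : 0 ≤ tent r x := le_max_left _ _

theorem tent_le_one (r x : ℝ) : tent r x ≤ 1 :=
  max_le zero_le_one (sub_le_self _ (abs_nonneg _))

theorem tent_half {r : ℝ} (hr : r ≠ 0) : tent r (r / 2) = 1 := by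
  simp [tent, mul_div_cancel₀ _ (two_ne_zero' ℝ), div_self hr]

theorem tent_eq_zero_of_le {r x : ℝ} (hr : 0 < r) (hx : r ≤ x) : tent r x = 0 := by
  have h : 1 ≤ 2 * x / r - 1 := by
    rw [le_sub_iff_add_le, le_div_iff₀ hr]
    linarith
  exact max_eq_left (by linarith [le_abs_self (2 * x / r - 1)])

noncomputable def tentC₀ (r : ℝ) : C₀(Ioc (0 : ℝ) 1, ℂ) :=
  ContinuousMap.restrictIoc 1
    ⟨fun x => (tent r x : ℂ), Complex.continuous_ofReal.comp (continuous_tent r)⟩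
    (by simp [tent_apply_zero])

theorem norm_tentC₀_apply (r : ℝ) (x : Ioc (0 : ℝ) 1) : ‖tentC₀ r x‖ = tent r x := by
  simp [tentC₀, ContinuousMap.restrictIoc, abs_of_nonneg (tent_nonneg r x)]

theorem norm_tentC₀ {r : ℝ} (hr₀ : 0 < r) (hr₂ : r ≤ 2) : ‖tentC₀ r‖ = 1 := by
  refine le_antisymm ((ZeroAtInftyContinuousMap.norm_le zero_le_one).mpr fun x => ?_) ?_
  · exact (norm_tentC₀_apply r x).trans_le (tent_le_one r x)
  · let peak : Ioc (0 : ℝ) 1 := ⟨r / 2, by positivity, by linarith⟩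
    calc (1 : ℝ) = ‖tentC₀ r peak‖ := by rw [norm_tentC₀_apply, tent_half hr₀.ne']
      _ ≤ ‖tentC₀ r‖ := ZeroAtInftyContinuousMap.norm_apply_le _ _

theorem eventually_eqOn_zero_tentC₀ {K : Set (Ioc (0 : ℝ) 1)} (hK : IsCompact K) :
    ∀ᶠ n : ℕ in atTop, EqOn (tentC₀ (1 / (n + 1))) 0 K := by
  obtain ⟨δ, hδ, hKδ⟩ := exists_gt_forall_le_of_isCompact_Ioc hK
  filter_upwards [tendsto_one_div_add_atTop_nhds_zero_nat.eventually (gt_mem_nhds hδ)]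
    with n hn x hx
  rw [Pi.zero_apply, ← norm_eq_zero, norm_tentC₀_apply]
  exact tent_eq_zero_of_le (by positivity) (hn.le.trans (hKδ x hx))

/-- In the C*-algebra `A = C₀((0,1], ℂ)`, viewed as a Hilbert module over itself with
`⟪f, g⟫ = f̄ g`, there is a sequence `{f n}` of norm-one elements with `‖⟪g, f n⟫‖ → 0`
for every `g ∈ A`; hence `C₀((0,1], ℂ)` does not have the module Schur property. -/
theorem c0_Ioc_not_module_schur :
    ∃ f : ℕ → C₀(Set.Ioc (0 : ℝ) 1, ℂ),
      (∀ g : C₀(Set.Ioc (0 : ℝ) 1, ℂ),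
        Tendsto (fun n => ‖star g * f n‖) atTop (𝓝 0)) ∧
      ∀ n, ‖f n‖ = 1 := by
  have hnorm (n : ℕ) : ‖tentC₀ (1 / (n + 1))‖ = 1 :=
    norm_tentC₀ (by positivity)
      (by rw [div_le_iff₀ (by positivity)]; linarith [n.cast_nonneg (α := ℝ)])
  refine ⟨fun n => tentC₀ (1 / (n + 1)), fun g => ?_, hnorm⟩
  have hbdd : (fun n : ℕ => tentC₀ (1 / (n + 1))) =O[atTop] (fun _ => (1 : ℝ)) :=
    isBigO_of_le _ fun n => by rw [hnorm, norm_one]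
  have hsmall := ((star g).isLittleO_mul_of_eventually_eqOn_zero
    fun _ hK => eventually_eqOn_zero_tentC₀ hK).trans_isBigO hbdd
  exact tendsto_zero_iff_norm_tendsto_zero.mp ((isLittleO_one_iff ℝ).mp hsmall)
end

section
/- A C*-algebra A with a strictly positive element (in particular any separable C*-algebra), viewed as a Hilbert A-module over itself, has the module Schur property if and only if A is unital. -/
open Filter Topology

/-!
Let `h` be strictly positive. The elements `eₙ = h (h + 1/(n+1))⁻¹`, obtained by functional
calculus, have norm at most `1` and satisfy `‖h eₙ - h‖ ≤ 1/(n+1)`; hence `b eₙ → b` for `b` in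
the dense set `hAh`, and then for every `b`, since right multiplication by `eₙ` is a contraction.
So `(eₙ)` is a sequential right approximate unit, and `(b* eₙ)` is convergent for every `b`.
The module Schur property makes `(eₙ)` itself converge, and its limit is a right unit, hence
(being self-adjoint) a unit.
-/

lemma mul_eq_self_of_forall_mul_eq_self {R : Type*} [Mul R] [StarMul R] {u : R}
    (hu : ∀ c, c * u = c) (a : R) : u * a = a := by
  have star_mul_eq_self : ∀ c, star u * c = c := fun c => by
    simpa using congrArg star (hu (star c))
  have star_eq : star u = u := by rw [← hu (star u), star_mul_eq_self]
  rw [← star_eq, star_mul_eq_self]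

lemma exists_forall_mul_eq_self_of_cauchySeq {R ι : Type*} [UniformSpace R] [CompleteSpace R]
    [T2Space R] [Mul R] [ContinuousMul R] [SemilatticeSup ι] [Nonempty ι] {e : ι → R}
    (he : CauchySeq e) (hlim : ∀ b : R, Tendsto (fun n => b * e n) atTop (𝓝 b)) :
    ∃ u : R, ∀ b, b * u = b := by
  obtain ⟨u, hu⟩ := cauchySeq_tendsto_of_complete he
  exact ⟨u, fun b => tendsto_nhds_unique (hu.const_mul b) (hlim b)⟩

lemma isClosed_setOf_tendsto_mul_right {R ι : Type*} [NonUnitalSeminormedRing R] {l : Filter ι}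
    {e : ι → R} (he : ∀ i, ‖e i‖ ≤ 1) :
    IsClosed {b : R | Tendsto (fun i => b * e i) l (𝓝 b)} := by
  have lipschitz : ∀ i, LipschitzWith 1 fun b : R => b * e i := fun i =>
    LipschitzWith.of_dist_le_mul fun b b' => by
      rw [dist_eq_norm, dist_eq_norm, ← sub_mul, NNReal.coe_one, one_mul]
      exact (norm_mul_le _ _).trans (mul_le_of_le_one_right (norm_nonneg _) (he i))
  exact (LipschitzWith.uniformEquicontinuous (fun i b => b * e i) 1 lipschitz).equicontinuous
    |>.isClosed_setOfPred_tendsto continuous_id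

lemma continuousOn_div_add {c : ℝ} (hc : 0 < c) :
    ContinuousOn (fun t : ℝ => t / (t + c)) (Set.Ici 0) :=
  continuousOn_id.div (by fun_prop) fun t (ht : 0 ≤ t) => by positivity

lemma abs_mul_div_add_sub_le {t c : ℝ} (ht : 0 ≤ t) (hc : 0 < c) :
    |t * (t / (t + c)) - t| ≤ c := by
  have hden : 0 < t + c := by positivity
  have : t * (t / (t + c)) - t = -(t * c / (t + c)) := by field_simp; ring
  rw [this, abs_neg, abs_of_nonneg (by positivity), div_le_iff₀ hden]
  nlinarith

section ApproximateUnit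

variable {A : Type*} [NonUnitalCStarAlgebra A] [PartialOrder A] [StarOrderedRing A] {h : A}

lemma norm_cfcₙ_div_add_le_one (hh : 0 ≤ h) {c : ℝ} (hc : 0 < c) :
    ‖cfcₙ (fun t : ℝ => t / (t + c)) h‖ ≤ 1 := by
  refine norm_cfcₙ_le fun t ht => ?_
  have ht : 0 ≤ t := quasispectrum_nonneg_of_nonneg h hh t ht
  rw [Real.norm_eq_abs, abs_of_nonneg (by positivity), div_le_one (by positivity)]
  linarith

lemma norm_mul_cfcₙ_div_add_sub_le (hh : 0 ≤ h) {c : ℝ} (hc : 0 < c) :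
    ‖h * cfcₙ (fun t : ℝ => t / (t + c)) h - h‖ ≤ c := by
  have hspec : quasispectrum ℝ h ⊆ Set.Ici 0 := quasispectrum_nonneg_of_nonneg h hh
  have hcont := (continuousOn_div_add hc).mono hspec
  have hcfc : h * cfcₙ (fun t : ℝ => t / (t + c)) h - h
      = cfcₙ (fun t : ℝ => t * (t / (t + c)) - t) h := by
    rw [cfcₙ_sub (fun t : ℝ => t * (t / (t + c))) (fun t : ℝ => t) h
        (continuousOn_id.mul hcont) (by simp) continuousOn_id (by simp),
      cfcₙ_mul (fun t : ℝ => t) _ h continuousOn_id (by simp) hcont (by simp), cfcₙ_id' ℝ h]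
  rw [hcfc]
  exact norm_cfcₙ_le fun t ht => abs_mul_div_add_sub_le (hspec ht) hc

lemma tendsto_mul_cfcₙ_div_add_inv_nat (hh : 0 ≤ h) :
    Tendsto (fun n : ℕ => h * cfcₙ (fun t : ℝ => t / (t + ((n : ℝ) + 1)⁻¹)) h) atTop (𝓝 h) := by
  rw [tendsto_iff_norm_sub_tendsto_zero]
  refine squeeze_zero (fun _ => norm_nonneg _)
    (fun n => norm_mul_cfcₙ_div_add_sub_le hh (by positivity)) ?_
  simpa only [one_div] using tendsto_one_div_add_atTop_nhds_zero_nat (𝕜 := ℝ)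

lemma exists_seq_forall_tendsto_mul_right (hh : 0 ≤ h)
    (hdense : Dense (Set.range fun a : A => h * a * h)) :
    ∃ e : ℕ → A, ∀ b, Tendsto (fun n => b * e n) atTop (𝓝 b) := by
  set e : ℕ → A := fun n => cfcₙ (fun t : ℝ => t / (t + ((n : ℝ) + 1)⁻¹)) h
  have hclosed := isClosed_setOf_tendsto_mul_right (e := e) (l := atTop)
    fun n => norm_cfcₙ_div_add_le_one hh (by positivity)
  have hsub : Set.range (fun a : A => h * a * h) ⊆ {b | Tendsto (fun n => b * e n) atTop (𝓝 b)} := by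
    rintro _ ⟨a, rfl⟩
    show Tendsto (fun n => h * a * h * e n) atTop (𝓝 (h * a * h))
    simpa only [mul_assoc] using (tendsto_mul_cfcₙ_div_add_inv_nat hh).const_mul (h * a)
  exact ⟨e, fun b => hclosed.closure_subset_iff.mpr hsub (hdense b)⟩

end ApproximateUnit

/-- A C*-algebra `A` with a strictly positive element (i.e. a positive `h` with `hAh` dense
in `A`), viewed as a Hilbert `A`-module over itself with `⟪a, b⟫ = a* b`, has the module
Schur property (every sequence `{x n}` with `b* x n` norm-Cauchy for all `b ∈ A` is itself
norm-Cauchy) if and only if `A` is unital. -/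
theorem module_schur_iff_unital {A : Type*} [NonUnitalCStarAlgebra A] [PartialOrder A] [StarOrderedRing A]
    (hsp : ∃ h : A, 0 ≤ h ∧ Dense (Set.range fun a : A => h * a * h)) :
    (∀ x : ℕ → A, (∀ b : A, CauchySeq fun n => star b * x n) → CauchySeq x) ↔
    ∃ e : A, ∀ a : A, e * a = a ∧ a * e = a := by
  refine ⟨fun hschur => ?_, fun ⟨u, hu⟩ x hx => ?_⟩
  · obtain ⟨h, hh, hdense⟩ := hsp
    obtain ⟨e, he⟩ := exists_seq_forall_tendsto_mul_right hh hdense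
    obtain ⟨u, hu⟩ := exists_forall_mul_eq_self_of_cauchySeq
      (hschur e fun b => (he (star b)).cauchySeq) he
    exact ⟨u, fun a => ⟨mul_eq_self_of_forall_mul_eq_self hu a, hu a⟩⟩
  · simpa only [star_star, (hu _).1] using hx (star u)
end

section
/- Let V be a Hilbert C*-module decomposed as an orthogonal direct sum V = V₁ ⊕ V₂. Then V has the module Schur property if and only if both V₁ and V₂ have the module Schur property. -/
open Filter Topology

/-- The Hilbert C*-module class `CStarModule` as it stood in Mathlib of December 2024
(right modules: `A` acts through `Aᵐᵒᵖ`). -/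
class RightCStarModule (A : outParam <| Type*) (E : Type*) [NonUnitalSemiring A] [StarRing A]
    [Module ℂ A] [AddCommGroup E] [Module ℂ E] [PartialOrder A] [SMul Aᵐᵒᵖ E] [Norm A] [Norm E]
    extends Inner A E where
  inner_add_right {x} {y} {z} : inner x (y + z) = inner x y + inner x z
  inner_self_nonneg {x} : 0 ≤ inner x x
  inner_self {x} : inner x x = 0 ↔ x = 0
  inner_op_smul_right {a : A} {x y : E} : inner x (MulOpposite.op a • y) = inner x y * a
  inner_smul_right_complex {z : ℂ} {x} {y} : inner x (z • y) = z • inner x y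
  star_inner x y : star (inner x y) = inner y x
  norm_eq_sqrt_norm_inner_self x : ‖x‖ = √‖inner x x‖

variable (A : Type*) {E : Type*} [NonUnitalCStarAlgebra A] [PartialOrder A] [StarOrderedRing A]
  [NormedAddCommGroup E] [NormedSpace ℂ E] [SMul Aᵐᵒᵖ E] [RightCStarModule A E]

/-- A subset `S` of a Hilbert C*-module has the module Schur property if every sequence in
`S` which is Cauchy for all the seminorms `x ↦ ‖⟪z, x⟫‖`, `z ∈ S`, is norm-Cauchy. -/
def ModuleSchurOn (S : Set E) : Prop :=
  ∀ x : ℕ → E, (∀ n, x n ∈ S) →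
    (∀ z ∈ S, CauchySeq fun n => (inner A z (x n) : A)) → CauchySeq x

variable {A}

/-! By orthogonality, `⟪z₁ + z₂, ·⟫` agrees with `⟪z₁, ·⟫` on `V₁`, so the seminorms defining the
topology `τ_{V̂}` on `V₁` are exactly those it inherits from `V`; hence the Schur property passes
from `V` to `V₁` (and likewise to `V₂`). Conversely, if `⟪z, xₙ⟫` is Cauchy for all `z`, then
testing against `z ∈ Vᵢ` shows that the components of `xₙ` in `V₁` and `V₂` are `τ`-Cauchy in the
summands, hence norm-Cauchy, and so is their sum `xₙ`. -/

section

variable {A E : Type*} [NonUnitalCStarAlgebra A] [PartialOrder A] [NormedAddCommGroup E]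
  [NormedSpace ℂ E] [SMul Aᵐᵒᵖ E] [RightCStarModule A E]

namespace RightCStarModule

theorem inner_add_left (x y z : E) : (inner A (x + y) z : A) = inner A x z + inner A y z := by
  rw [← star_inner, inner_add_right, star_add, star_inner, star_inner]

theorem inner_eq_zero_comm {x y : E} : (inner A x y : A) = 0 ↔ (inner A y x : A) = 0 := by
  rw [← star_inner x y, star_eq_zero]

end RightCStarModule

theorem ModuleSchurOn.of_subset {S T : Set E} (hT : ModuleSchurOn A T) (hST : S ⊆ T)
    (hinner : ∀ z ∈ T, ∃ z' ∈ S, ∀ x ∈ S, (inner A z x : A) = inner A z' x) :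
    ModuleSchurOn A S := by
  intro x hxS hx
  refine hT x (fun n => hST (hxS n)) fun z hz => ?_
  obtain ⟨z', hz'S, hzz'⟩ := hinner z hz
  simpa only [hzz' _ (hxS _)] using hx z' hz'S

theorem ModuleSchurOn.of_orthogonal_sum {S₁ S₂ T : Set E} (h₁ : ModuleSchurOn A S₁)
    (h₂ : ModuleSchurOn A S₂) (hS₁ : S₁ ⊆ T) (hS₂ : S₂ ⊆ T)
    (horth : ∀ x ∈ S₁, ∀ y ∈ S₂, (inner A x y : A) = 0)
    (hsum : ∀ v ∈ T, ∃ x ∈ S₁, ∃ y ∈ S₂, v = x + y) :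
    ModuleSchurOn A T := by
  intro v hvT hv
  choose x hx y hy hxy using fun n => hsum (v n) (hvT n)
  have hxCauchy : CauchySeq x := h₁ x hx fun z hz => by
    have hzv : ∀ n, (inner A z (v n) : A) = inner A z (x n) := fun n => by
      rw [hxy n, RightCStarModule.inner_add_right, horth z hz (y n) (hy n), add_zero]
    simpa only [hzv] using hv z (hS₁ hz)
  have hyCauchy : CauchySeq y := h₂ y hy fun z hz => by
    have hzv : ∀ n, (inner A z (v n) : A) = inner A z (y n) := fun n => by
      rw [hxy n, RightCStarModule.inner_add_right,
        RightCStarModule.inner_eq_zero_comm.mp (horth (x n) (hx n) z hz), zero_add]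
    simpa only [hzv] using hv z (hS₂ hz)
  rw [funext hxy]
  exact hxCauchy.add hyCauchy

end

theorem module_schur_direct_sum_general (V₁ V₂ : Submodule ℂ E)
    (horth : ∀ x ∈ V₁, ∀ y ∈ V₂, (inner A x y : A) = 0)
    (hsum : ∀ v : E, ∃ x ∈ V₁, ∃ y ∈ V₂, v = x + y) :
    ModuleSchurOn A (Set.univ : Set E) ↔
      ModuleSchurOn A (V₁ : Set E) ∧ ModuleSchurOn A (V₂ : Set E) := by
  constructor
  · intro h
    refine ⟨h.of_subset (Set.subset_univ _) fun z _ => ?_,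
      h.of_subset (Set.subset_univ _) fun z _ => ?_⟩
    all_goals obtain ⟨z₁, hz₁, z₂, hz₂, rfl⟩ := hsum z
    · refine ⟨z₁, hz₁, fun x hx => ?_⟩
      rw [RightCStarModule.inner_add_left,
        RightCStarModule.inner_eq_zero_comm.mp (horth x hx z₂ hz₂), add_zero]
    · refine ⟨z₂, hz₂, fun x hx => ?_⟩
      rw [RightCStarModule.inner_add_left, horth z₁ hz₁ x hx, zero_add]
  · rintro ⟨h₁, h₂⟩
    exact h₁.of_orthogonal_sum h₂ (Set.subset_univ _) (Set.subset_univ _) horth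
      fun v _ => hsum v

/-- Let a Hilbert C*-module `E` be the orthogonal direct sum of closed submodules `V₁` and
`V₂`. Then `E` has the module Schur property iff both `V₁` and `V₂` do. -/
theorem module_schur_direct_sum [CompleteSpace E] (V₁ V₂ : Submodule ℂ E)
    (h₁c : IsClosed (V₁ : Set E)) (h₂c : IsClosed (V₂ : Set E))
    (h₁s : ∀ (a : A), ∀ x ∈ V₁, MulOpposite.op a • x ∈ V₁)
    (h₂s : ∀ (a : A), ∀ x ∈ V₂, MulOpposite.op a • x ∈ V₂)
    (horth : ∀ x ∈ V₁, ∀ y ∈ V₂, (inner A x y : A) = 0)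
    (hsum : ∀ v : E, ∃ x ∈ V₁, ∃ y ∈ V₂, v = x + y) :
    ModuleSchurOn A (Set.univ : Set E) ↔
      ModuleSchurOn A (V₁ : Set E) ∧ ModuleSchurOn A (V₂ : Set E) :=
  module_schur_direct_sum_general V₁ V₂ horth hsum
end

section
/- Every Hilbert C*-module V has the property (mBS1): every sequence {x_n} in V with ‖⟨z, x_n⟩‖ → 0 for all z ∈ V admits a subsequence {x_{n(i)}} such that ‖(1/k) Σ_{i=1}^{k} x_{n(i)}‖ → 0 as k → ∞. -/
/-!
The sequence is bounded: apply the uniform boundedness principle to the functionals `⟪x n, ·⟫`.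
Since `⟪z, x n⟫ → 0` for each fixed `z`, a subsequence `y i = x (φ i)` can be extracted inductively
with `‖⟪y i, y j⟫‖ ≤ 2⁻ⁱ` for `i < j`. In `‖∑_{i<k} y i‖² = ‖∑_{i,j} ⟪y i, y j⟫‖` the diagonal then
contributes at most `k M²` and the off-diagonal terms at most `4k`, so the Cesàro means have norm
`O(k^{-1/2})`.
-/

open Filter Topology

variable {A : Type*} [NonUnitalCStarAlgebra A] [PartialOrder A] [StarOrderedRing A]
variable {E : Type*} [NormedAddCommGroup E] [NormedSpace ℂ E] [SMul A E] [CStarModule A E]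

local notation "⟪" x ", " y "⟫" => inner (𝕜 := A) x y

open Finset

theorem exists_strictMono_forall_lt_le_of_tendsto {f : ℕ → ℕ → ℝ}
    (hf : ∀ m, Tendsto (f m) atTop (𝓝 0)) {ε : ℕ → ℝ} (hε_pos : ∀ i, 0 < ε i)
    (hε_anti : Antitone ε) :
    ∃ φ : ℕ → ℕ, StrictMono φ ∧ ∀ i j, i < j → f (φ i) (φ j) ≤ ε i := by
  obtain ⟨φ, -, hφ⟩ := exists_seq_of_forall_finset_exists (fun _ : ℕ => True)
    (fun m n => m < n ∧ f m n ≤ ε m) fun s _ => by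
      have : ∀ᶠ n in atTop, ∀ m ∈ s, m < n ∧ f m n ≤ ε m := by
        rw [eventually_all_finset]
        exact fun m _ => (eventually_gt_atTop m).and ((hf m).eventually_le_const (hε_pos m))
      obtain ⟨n, hn⟩ := this.exists
      exact ⟨n, trivial, hn⟩
  have hφ_mono : StrictMono φ := fun i j hij => (hφ i j hij).1
  exact ⟨φ, hφ_mono, fun i j hij => (hφ i j hij).2.trans (hε_anti hφ_mono.le_apply)⟩

theorem tendsto_norm_inv_smul_of_norm_sq_le {F : Type*} [NormedAddCommGroup F] [NormedSpace ℝ F]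
    {s : ℕ → F} {C : ℝ} (h : ∀ k : ℕ, ‖s k‖ ^ 2 ≤ ((k : ℝ) + 1) * C) :
    Tendsto (fun k : ℕ => ‖((k : ℝ) + 1)⁻¹ • s k‖) atTop (𝓝 0) := by
  have hbound : ∀ k : ℕ, ‖((k : ℝ) + 1)⁻¹ • s k‖ ≤ √(C * (1 / ((k : ℝ) + 1))) := fun k => by
    have hk : (0 : ℝ) < k + 1 := k.cast_add_one_pos
    refine Real.le_sqrt_of_sq_le ?_
    rw [norm_smul, mul_pow, Real.norm_of_nonneg (inv_pos.2 hk).le]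
    calc ((k : ℝ) + 1)⁻¹ ^ 2 * ‖s k‖ ^ 2 ≤ ((k : ℝ) + 1)⁻¹ ^ 2 * (((k : ℝ) + 1) * C) := by
          gcongr; exact h k
      _ = C * (1 / ((k : ℝ) + 1)) := by field_simp
  refine squeeze_zero (fun _ => norm_nonneg _) hbound ?_
  simpa using (tendsto_one_div_add_atTop_nhds_zero_nat.const_mul C).sqrt

namespace CStarModule

section

variable {B F : Type*} [NonUnitalCStarAlgebra B] [PartialOrder B] [AddCommGroup F] [Module ℂ F]
  [SMul B F] [Norm F] [CStarModule B F]

theorem norm_inner_comm (x y : F) : ‖inner B x y‖ = ‖inner B y x‖ := by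
  rw [← star_inner, norm_star]

theorem norm_sum_sq_le_of_norm_inner_le {y : ℕ → F} {M S : ℝ} {ε : ℕ → ℝ} {K : ℕ}
    (hM : ∀ i, ‖y i‖ ≤ M) (hε : ∀ i, 0 ≤ ε i) (hS : ∑ i ∈ range K, ε i ≤ S)
    (horth : ∀ i j, i < j → ‖inner B (y i) (y j)‖ ≤ ε i) :
    ‖∑ i ∈ range K, y i‖ ^ 2 ≤ K * (M ^ 2 + 2 * S) := by
  have hpair : ∀ i j, ‖inner B (y i) (y j)‖ ≤ (if i = j then M ^ 2 else 0) + ε i + ε j := by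
    intro i j
    rcases lt_trichotomy i j with hij | rfl | hij
    · simpa [hij.ne] using (horth i j hij).trans (le_add_of_nonneg_right (hε j))
    · rw [if_pos rfl, ← norm_sq_eq B]
      have := pow_le_pow_left₀ (CStarModule.norm_nonneg B) (hM i) 2
      linarith [hε i]
    · rw [norm_inner_comm]
      simpa [hij.ne'] using (horth j i hij).trans (le_add_of_nonneg_left (hε i))
  calc ‖∑ i ∈ range K, y i‖ ^ 2
      = ‖∑ i ∈ range K, ∑ j ∈ range K, inner B (y i) (y j)‖ := by
        rw [norm_sq_eq B, inner_sum_left]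
        simp only [inner_sum_right]
    _ ≤ ∑ i ∈ range K, ∑ j ∈ range K, ‖inner B (y i) (y j)‖ :=
        (norm_sum_le _ _).trans (sum_le_sum fun i _ => norm_sum_le _ _)
    _ ≤ ∑ i ∈ range K, ∑ j ∈ range K, ((if i = j then M ^ 2 else 0) + ε i + ε j) :=
        sum_le_sum fun i _ => sum_le_sum fun j _ => hpair i j
    _ = K * M ^ 2 + 2 * K * ∑ i ∈ range K, ε i := by
        simp +contextual only [sum_add_distrib, sum_ite_eq, if_true, sum_const, card_range, nsmul_eq_mul,
          ← mul_sum]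
        ring
    _ ≤ K * (M ^ 2 + 2 * S) := by nlinarith [K.cast_nonneg (α := ℝ)]

end

theorem norm_le_norm_innerSL (x : E) : ‖x‖ ≤ ‖(innerSL (A := A) x : E →L[ℂ] A)‖ := by
  rcases (norm_nonneg x).eq_or_lt with hx | hx
  · exact hx ▸ norm_nonneg _
  · refine le_of_mul_le_mul_right ?_ hx
    calc ‖x‖ * ‖x‖ = ‖innerSL (A := A) x x‖ := by rw [← sq, norm_sq_eq A]; rfl
      _ ≤ ‖(innerSL (A := A) x : E →L[ℂ] A)‖ * ‖x‖ := (innerSL (A := A) x : E →L[ℂ] A).le_opNorm x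

theorem exists_norm_le_of_bddAbove_norm_inner [CompleteSpace E] {ι : Type*} (x : ι → E)
    (h : ∀ z : E, BddAbove (Set.range fun i => ‖⟪z, x i⟫‖)) : ∃ C, ∀ i, ‖x i‖ ≤ C := by
  obtain ⟨C, hC⟩ := banach_steinhaus (g := fun i => (innerSL (A := A) (x i) : E →L[ℂ] A))
    fun z => by
      obtain ⟨C, hC⟩ := h z
      exact ⟨C, fun i => (norm_inner_comm (x i) z).trans_le (hC ⟨i, rfl⟩)⟩
  exact ⟨C, fun i => (norm_le_norm_innerSL (x i)).trans (hC i)⟩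

end CStarModule

/-- Every Hilbert C*-module has property (mBS1): every `τ_V̂`-null sequence `{x n}`
(`‖⟪z, x n⟫‖ → 0` for all `z`) admits a subsequence whose Cesàro means tend to `0` in
norm. -/
theorem module_mBS1 [CompleteSpace E] (x : ℕ → E)
    (h : ∀ z : E, Tendsto (fun n => ‖⟪z, x n⟫‖) atTop (𝓝 0)) :
    ∃ φ : ℕ → ℕ, StrictMono φ ∧
      Tendsto (fun k => ‖(((k : ℕ) + 1 : ℝ))⁻¹ • ∑ i ∈ Finset.range (k + 1), x (φ i)‖)
        atTop (𝓝 0) := by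
  obtain ⟨M, hM⟩ :=
    CStarModule.exists_norm_le_of_bddAbove_norm_inner x fun z => (h z).bddAbove_range
  obtain ⟨φ, hφ, horth⟩ := exists_strictMono_forall_lt_le_of_tendsto (fun m => h (x m))
    (fun i => pow_pos one_half_pos i) (pow_right_anti₀ one_half_pos.le one_half_lt_one.le)
  refine ⟨φ, hφ, tendsto_norm_inv_smul_of_norm_sq_le (C := M ^ 2 + 2 * 2) fun k => ?_⟩
  exact_mod_cast CStarModule.norm_sum_sq_le_of_norm_inner_le (K := k + 1) (fun i => hM (φ i))
    (fun i => by positivity) (sum_geometric_two_le (k + 1)) horth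
end

section
/- Let V be a Hilbert C*-module and {x_n} a τ_{V̂}-convergent sequence admitting a subsequence {x_{n(i)}} whose Cesàro means (1/k) Σ_{i=1}^{k} x_{n(i)} converge in norm to x ∈ V. Then x is the τ_{V̂}-limit of the original sequence {x_n}, i.e. ‖⟨z, x_n − x⟩‖ → 0 for all z ∈ V. -/
/-!
Fix `z`. As `A` is complete, `⟪z, x n⟫` has a limit `L`, which is then also the limit of the
Cesàro means of the subsequence `⟪z, x (φ i)⟫`. By the Cauchy–Schwarz inequality
`‖⟪z, y⟫‖ ≤ ‖z‖ ‖y‖`, the map `y ↦ ⟪z, y⟫` is a continuous linear map, so these means are the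
images of the Cesàro means of `x ∘ φ` and converge to `⟪z, x₀⟫`. Hence `L = ⟪z, x₀⟫`.
-/

open Filter Topology

/-- The Hilbert C⋆-module class as Mathlib defined it in December 2024 (right `A`-module via
`SMul Aᵐᵒᵖ E`); Mathlib's current `CStarModule` uses a left action with other axioms. -/
class OldCStarModule (A E : Type*) [NonUnitalSemiring A] [StarRing A]
    [Module ℂ A] [AddCommGroup E] [Module ℂ E] [PartialOrder A] [SMul Aᵐᵒᵖ E] [Norm A] [Norm E]
    extends Inner A E where
  inner_add_right {x} {y} {z} : inner x (y + z) = inner x y + inner x z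
  inner_self_nonneg {x} : 0 ≤ inner x x
  inner_self {x} : inner x x = 0 ↔ x = 0
  inner_op_smul_right {a : A} {x y : E} : inner x (MulOpposite.op a • y) = inner x y * a
  inner_smul_right_complex {z : ℂ} {x} {y} : inner x (z • y) = z • inner x y
  star_inner x y : star (inner x y) = inner y x
  norm_eq_sqrt_norm_inner_self x : ‖x‖ = √‖inner x x‖

variable {A : Type*} [NonUnitalCStarAlgebra A] [PartialOrder A] [StarOrderedRing A]
variable {E : Type*} [NormedAddCommGroup E] [NormedSpace ℂ E] [SMul Aᵐᵒᵖ E] [OldCStarModule A E]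

local notation "⟪" x ", " y "⟫" => inner (𝕜 := A) x y

theorem Filter.Tendsto.cesaro_smul_comp_strictMono {F : Type*} [NormedAddCommGroup F]
    [NormedSpace ℝ F] {u : ℕ → F} {l : F} (hu : Tendsto u atTop (𝓝 l)) {φ : ℕ → ℕ}
    (hφ : StrictMono φ) :
    Tendsto (fun k : ℕ => ((k : ℝ) + 1)⁻¹ • ∑ i ∈ Finset.range (k + 1), u (φ i)) atTop (𝓝 l) := by
  simpa [Function.comp_def] using
    (hu.comp hφ.tendsto_atTop).cesaro_smul.comp (tendsto_add_atTop_nat 1)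

namespace OldCStarModule

variable (A) in
def innerRight (x : E) : E →ₗ[ℂ] A where
  toFun y := ⟪x, y⟫
  map_add' _ _ := OldCStarModule.inner_add_right
  map_smul' _ _ := OldCStarModule.inner_smul_right_complex

lemma inner_sub_right {x y z : E} : ⟪x, y - z⟫ = ⟪x, y⟫ - ⟪x, z⟫ :=
  map_sub (innerRight A x) y z

lemma inner_sub_left {x y z : E} : ⟪x - y, z⟫ = ⟪x, z⟫ - ⟪y, z⟫ := by
  rw [← OldCStarModule.star_inner (A := A) z, inner_sub_right, star_sub,
    OldCStarModule.star_inner, OldCStarModule.star_inner]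

lemma inner_op_smul_left {a : A} {x y : E} :
    ⟪MulOpposite.op a • x, y⟫ = star a * ⟪x, y⟫ := by
  rw [← OldCStarModule.star_inner (A := A) y, OldCStarModule.inner_op_smul_right, star_mul,
    OldCStarModule.star_inner]

lemma inner_smul_right_real {r : ℝ} {x y : E} : ⟪x, r • y⟫ = r • ⟪x, y⟫ :=
  (innerRight A x).map_smul_of_tower r y

lemma inner_smul_left_real {r : ℝ} {x y : E} : ⟪r • x, y⟫ = r • ⟪x, y⟫ := by
  rw [← OldCStarModule.star_inner (A := A) y, inner_smul_right_real, star_smul, star_trivial,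
    OldCStarModule.star_inner]

lemma norm_inner_self (x : E) : ‖⟪x, x⟫‖ = ‖x‖ ^ 2 := by
  rw [OldCStarModule.norm_eq_sqrt_norm_inner_self (A := A) x, Real.sq_sqrt (norm_nonneg _)]

lemma inner_mul_inner_swap_le {x y : E} : ⟪y, x⟫ * ⟪x, y⟫ ≤ ‖x‖ ^ 2 • ⟪y, y⟫ := by
  rcases eq_or_ne x 0 with rfl | hx
  · simp [show ⟪y, (0 : E)⟫ = 0 from map_zero (innerRight A y)]
  rw [← OldCStarModule.star_inner (A := A) x y]
  set a := ⟪x, y⟫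
  set c : ℝ := ‖x‖ ^ 2
  have hw : 0 ≤ star a * ⟪x, x⟫ * a - c • (star a * a) - c • (star a * a) + c • (c • ⟪y, y⟫) := by
    calc (0 : A) ≤ ⟪MulOpposite.op a • x - c • y, MulOpposite.op a • x - c • y⟫ :=
          OldCStarModule.inner_self_nonneg
      _ = _ := by
          simp only [inner_sub_right, inner_sub_left, OldCStarModule.inner_op_smul_right,
            inner_op_smul_left, inner_smul_left_real, inner_smul_right_real,
            ← OldCStarModule.star_inner (A := A) x y, sub_mul, smul_mul_assoc, smul_sub,
            mul_assoc]
          abel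
  have hconj : star a * ⟪x, x⟫ * a ≤ c • (star a * a) := by
    calc star a * ⟪x, x⟫ * a ≤ ‖⟪x, x⟫‖ • (star a * a) :=
          CStarAlgebra.star_left_conjugate_le_norm_smul (OldCStarModule.star_inner (A := A) x x)
      _ = c • (star a * a) := by rw [norm_inner_self]
  have hc : 0 < c := pow_pos (norm_pos_iff.mpr hx) 2
  rw [← smul_le_smul_iff_of_pos_left hc, ← sub_nonneg]
  calc (0 : A) ≤ _ := hw
    _ ≤ c • (star a * a) - c • (star a * a) - c • (star a * a) + c • (c • ⟪y, y⟫) := by gcongr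
    _ = c • (c • ⟪y, y⟫) - c • (star a * a) := by abel

lemma norm_inner_le {x y : E} : ‖⟪x, y⟫‖ ≤ ‖x‖ * ‖y‖ := by
  refine (pow_le_pow_iff_left₀ (norm_nonneg _) (by positivity) two_ne_zero).mp ?_
  calc ‖⟪x, y⟫‖ ^ 2 = ‖⟪y, x⟫ * ⟪x, y⟫‖ := by
        rw [← OldCStarModule.star_inner (A := A) x y, CStarRing.norm_star_mul_self, pow_two]
    _ ≤ ‖‖x‖ ^ 2 • ⟪y, y⟫‖ := by
        refine CStarAlgebra.norm_le_norm_of_nonneg_of_le ?_ inner_mul_inner_swap_le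
        rw [← OldCStarModule.star_inner (A := A) x y]
        exact star_mul_self_nonneg _
    _ = (‖x‖ * ‖y‖) ^ 2 := by rw [norm_smul, norm_pow, norm_norm, norm_inner_self, mul_pow]

variable (A) in
def innerRightL (x : E) : E →L[ℂ] A :=
  (innerRight A x).mkContinuous ‖x‖ fun _ => norm_inner_le

@[simp]
lemma innerRightL_apply (x y : E) : innerRightL A x y = ⟪x, y⟫ := rfl

end OldCStarModule

theorem tauHat_lim_of_cesaro_norm_lim_general (x : ℕ → E)
    (hx : ∀ z : E, CauchySeq fun n => ⟪z, x n⟫)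
    (φ : ℕ → ℕ) (hφ : StrictMono φ) (x₀ : E)
    (hces : Tendsto (fun k => (((k : ℕ) + 1 : ℝ))⁻¹ • ∑ i ∈ Finset.range (k + 1), x (φ i))
      atTop (𝓝 x₀)) :
    ∀ z : E, Tendsto (fun n => ‖⟪z, x n - x₀⟫‖) atTop (𝓝 0) := by
  intro z
  obtain ⟨L, hL⟩ := cauchySeq_tendsto_of_complete (hx z)
  have hL₀ : L = ⟪z, x₀⟫ := by
    refine tendsto_nhds_unique (hL.cesaro_smul_comp_strictMono hφ) ?_
    simpa only [Function.comp_def, ContinuousLinearMap.map_smul_of_tower, map_sum,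
      OldCStarModule.innerRightL_apply] using
      ((OldCStarModule.innerRightL A z).continuous.tendsto x₀).comp hces
  subst hL₀
  simpa only [OldCStarModule.inner_sub_right, sub_self, norm_zero] using
    (hL.sub_const ⟪z, x₀⟫).norm

/-- If `{x n}` is a `τ_V̂`-convergent (Cauchy) sequence in a Hilbert C*-module admitting a
subsequence whose Cesàro means converge in norm to `x₀ ∈ E`, then `x₀` is the `τ_V̂`-limit
of the original sequence: `‖⟪z, x n - x₀⟫‖ → 0` for all `z`. -/
theorem tauHat_lim_of_cesaro_norm_lim [CompleteSpace E] (x : ℕ → E)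
    (hx : ∀ z : E, CauchySeq fun n => ⟪z, x n⟫)
    (φ : ℕ → ℕ) (hφ : StrictMono φ) (x₀ : E)
    (hces : Tendsto (fun k => (((k : ℕ) + 1 : ℝ))⁻¹ • ∑ i ∈ Finset.range (k + 1), x (φ i))
      atTop (𝓝 x₀)) :
    ∀ z : E, Tendsto (fun n => ‖⟪z, x n - x₀⟫‖) atTop (𝓝 0) :=
  tauHat_lim_of_cesaro_norm_lim_general x hx φ hφ x₀ hces
end

section
/- The C*-algebra A = K(ℓ²) of compact operators on a separable Hilbert space, viewed as a Hilbert A-module over itself, does not have the property (mBS2): the sequence of partial sums q_k = Σ_{i=1}^{k} p_i of a sequence of pairwise orthogonal rank-one projections with supremum the identity is τ_{V̂}-convergent, but no subsequence has norm-convergent Cesàro means in K(ℓ²). -/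
open Filter Topology

/-!
The partial sums `q k` are self-adjoint, bounded uniformly in `k` by Banach–Steinhaus, and
converge strongly to `1`. A bounded family is equicontinuous, so strong convergence is uniform
on the compact set `closure (b '' closedBall 0 1)`; hence `q k ∘ b → b` in norm, and taking
adjoints, `b† ∘ q k → b†`. On the other hand, a norm limit of Cesàro means of `q (φ m)` must
agree with their strong limit `1`, and the identity is compact only in finite dimension, which
the infinite orthonormal family of unit vectors spanning the ranges of the `p i` rules out.
-/

section StrongConvergence

variable {𝕜 E F : Type*} [NontriviallyNormedField 𝕜] [NormedAddCommGroup E] [NormedSpace 𝕜 E]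
  [NormedAddCommGroup F] [NormedSpace 𝕜 F]

theorem ContinuousLinearMap.exists_norm_le_of_tendsto_apply [CompleteSpace E]
    {T : ℕ → E →L[𝕜] F} {g : E → F} (h : ∀ x, Tendsto (fun k => T k x) atTop (𝓝 (g x))) :
    ∃ C, ∀ k, ‖T k‖ ≤ C :=
  banach_steinhaus fun x => by
    obtain ⟨C, hC⟩ := (h x).norm.bddAbove_range
    exact ⟨C, fun k => hC ⟨k, rfl⟩⟩

theorem ContinuousLinearMap.tendstoUniformlyOn_of_tendsto_apply {ι : Type*} {l : Filter ι}
    {T : ι → E →L[𝕜] F} {S : E →L[𝕜] F} {C : ℝ} (hC : ∀ i, ‖T i‖ ≤ C)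
    (h : ∀ x, Tendsto (fun i => T i x) l (𝓝 (S x))) {K : Set E} (hK : IsCompact K) :
    TendstoUniformlyOn (fun i => ⇑(T i)) S l K := by
  have hlip : ∀ i, LipschitzWith (Real.toNNReal C) (T i) := fun i =>
    (T i).lipschitz.weaken (by simpa using Real.toNNReal_le_toNNReal (hC i))
  have hequi : EquicontinuousOn (fun i => ⇑(T i)) K :=
    (LipschitzWith.uniformEquicontinuous _ _ hlip).equicontinuous.equicontinuousOn K
  have hunif := (EquicontinuousOn.tendsto_uniformOnFun_iff_pi' (𝔖 := {K}) (by simpa using hK)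
    (by simpa using hequi) l S).2 (by simpa [tendsto_pi_nhds] using fun x _ => h x)
  exact UniformOnFun.tendsto_iff_tendstoUniformlyOn.1 hunif K rfl

end StrongConvergence

theorem IsCompactOperator.tendsto_comp_of_tendsto_apply {𝕜 E F G ι : Type*} [RCLike 𝕜]
    [NormedAddCommGroup E] [NormedSpace 𝕜 E] [NormedAddCommGroup F] [NormedSpace 𝕜 F]
    [NormedAddCommGroup G] [NormedSpace 𝕜 G] {l : Filter ι}
    {T : ι → E →L[𝕜] F} {S : E →L[𝕜] F} {C : ℝ} (hC : ∀ i, ‖T i‖ ≤ C)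
    (h : ∀ x, Tendsto (fun i => T i x) l (𝓝 (S x))) {b : G →L[𝕜] E} (hb : IsCompactOperator b) :
    Tendsto (fun i => T i ∘L b) l (𝓝 (S ∘L b)) := by
  have hunif := ContinuousLinearMap.tendstoUniformlyOn_of_tendsto_apply hC h
    (hb.isCompact_closure_image_closedBall (𝕜₁ := 𝕜) 1)
  rw [Metric.tendsto_nhds]
  intro ε hε
  filter_upwards [Metric.tendstoUniformlyOn_iff.1 hunif (ε / 2) (half_pos hε)] with i hi
  rw [dist_eq_norm]
  refine lt_of_le_of_lt (ContinuousLinearMap.opNorm_le_of_unit_norm (half_pos hε).le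
    fun x hx => ?_) (half_lt_self hε)
  have hbx : b x ∈ closure (b '' Metric.closedBall 0 1) :=
    subset_closure ⟨x, by simp [hx], rfl⟩
  simpa [dist_eq_norm'] using (hi (b x) hbx).le

theorem ContinuousLinearMap.tendsto_adjoint_comp_of_tendsto_apply {𝕜 E F : Type*} [RCLike 𝕜]
    [NormedAddCommGroup E] [InnerProductSpace 𝕜 E] [CompleteSpace E]
    [NormedAddCommGroup F] [InnerProductSpace 𝕜 F] [CompleteSpace F]
    {T : ℕ → E →L[𝕜] E} (hT : ∀ k, IsSelfAdjoint (T k))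
    (h : ∀ x, Tendsto (fun k => T k x) atTop (𝓝 x)) {b : F →L[𝕜] E} (hb : IsCompactOperator b) :
    Tendsto (fun k => adjoint b ∘L T k) atTop (𝓝 (adjoint b)) := by
  obtain ⟨C, hC⟩ := exists_norm_le_of_tendsto_apply h
  have hcomp := (adjoint.continuous.tendsto _).comp
    (hb.tendsto_comp_of_tendsto_apply (S := .id 𝕜 E) hC h)
  simpa [Function.comp_def, adjoint_comp, (hT _).adjoint_eq] using hcomp

theorem orthonormal_of_rankOne_comp_eq_zero {𝕜 E ι : Type*} [RCLike 𝕜] [NormedAddCommGroup E]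
    [InnerProductSpace 𝕜 E] {u : ι → E} (hu : ∀ i, ‖u i‖ = 1)
    (h : ∀ i j, i ≠ j → InnerProductSpace.rankOne 𝕜 (u i) (u i) ∘L
      InnerProductSpace.rankOne 𝕜 (u j) (u j) = 0) : Orthonormal 𝕜 u := by
  refine ⟨hu, fun {i j} hij => ?_⟩
  have hzero := congr($(h i j hij) (u j))
  have hui : u i ≠ 0 := norm_ne_zero_iff.1 (by simp [hu i])
  simpa [inner_self_eq_norm_sq_to_K, hu j, hui] using hzero

theorem ContinuousLinearMap.eq_of_tendsto_cesaro {𝕜 E F : Type*} [RCLike 𝕜]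
    [NormedAddCommGroup E] [NormedSpace 𝕜 E] [NormedAddCommGroup F] [NormedSpace 𝕜 F]
    [NormedSpace ℝ F] [IsScalarTower ℝ 𝕜 F] {A : ℕ → E →L[𝕜] F} {S L : E →L[𝕜] F}
    (hA : ∀ x, Tendsto (fun m => A m x) atTop (𝓝 (S x)))
    (hL : Tendsto (fun j : ℕ => ((j : ℝ) + 1)⁻¹ • ∑ m ∈ Finset.range (j + 1), A m) atTop (𝓝 L)) :
    L = S := by
  ext x
  have hLx := ((apply 𝕜 F x).continuous.tendsto L).comp hL
  have hSx := (hA x).cesaro_smul.comp (tendsto_add_atTop_nat 1)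
  refine tendsto_nhds_unique ?_ hSx
  simpa [Function.comp_def] using hLx

theorem compact_operators_not_mBS2_general {H : Type*} [NormedAddCommGroup H]
    [InnerProductSpace ℂ H] [CompleteSpace H]
    (p : ℕ → H →L[ℂ] H)
    (hrank : ∀ i, ∃ u : H, ‖u‖ = 1 ∧ ∀ w : H, p i w = (inner ℂ u w : ℂ) • u)
    (horth : ∀ i j, i ≠ j → (p i).comp (p j) = 0)
    (hsup : ∀ v : H, Tendsto (fun k => (∑ i ∈ Finset.range k, p i) v) atTop (𝓝 v)) :
    (∀ b : H →L[ℂ] H, IsCompactOperator b →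
      CauchySeq fun k => (ContinuousLinearMap.adjoint b).comp (∑ i ∈ Finset.range k, p i)) ∧
    ¬ ∃ φ : ℕ → ℕ, StrictMono φ ∧ ∃ l : H →L[ℂ] H, IsCompactOperator l ∧
      Tendsto (fun j => (((j : ℕ) + 1 : ℝ))⁻¹ •
          ∑ m ∈ Finset.range (j + 1), ∑ i ∈ Finset.range (φ m), p i)
        atTop (𝓝 l) := by
  choose u hu hpu using hrank
  have hp : ∀ i, p i = InnerProductSpace.rankOne ℂ (u i) (u i) := fun i =>
    ContinuousLinearMap.ext (hpu i)
  have hsa : ∀ k, IsSelfAdjoint (∑ i ∈ Finset.range k, p i) := fun k =>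
    isSelfAdjoint_sum _ fun i _ =>
      hp i ▸ (InnerProductSpace.isStarProjection_rankOne_self (hu i)).isSelfAdjoint
  refine ⟨fun b hb =>
    (ContinuousLinearMap.tendsto_adjoint_comp_of_tendsto_apply hsa hsup hb).cauchySeq, ?_⟩
  rintro ⟨φ, hφ, l, hl, hcesaro⟩
  have hl_id : l = .id ℂ H :=
    ContinuousLinearMap.eq_of_tendsto_cesaro (fun v => (hsup v).comp hφ.tendsto_atTop) hcesaro
  have : FiniteDimensional ℂ H := .of_isCompactOperator_id (by simpa [hl_id] using hl)
  have hu_orth : Orthonormal ℂ u := orthonormal_of_rankOne_comp_eq_zero hu fun i j hij => by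
    simpa only [hp] using horth i j hij
  exact Infinite.not_finite hu_orth.linearIndependent.finite

/-- The C*-algebra `K(ℓ²)` of compact operators on a separable Hilbert space, viewed as a
Hilbert module over itself, fails property (mBS2): for pairwise orthogonal rank-one
projections `p i` with strong sum the identity, the partial sums `q k = ∑_{i<k} p i` form a
`τ_V̂`-convergent sequence (i.e. `b* ∘ q k` is norm-Cauchy for every compact `b`), but no
subsequence of `{q k}` has Cesàro means converging in norm to a compact operator. -/
theorem compact_operators_not_mBS2 {H : Type*} [NormedAddCommGroup H]
    [InnerProductSpace ℂ H] [CompleteSpace H] [TopologicalSpace.SeparableSpace H]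
    (p : ℕ → H →L[ℂ] H)
    (hrank : ∀ i, ∃ u : H, ‖u‖ = 1 ∧ ∀ w : H, p i w = (inner ℂ u w : ℂ) • u)
    (horth : ∀ i j, i ≠ j → (p i).comp (p j) = 0)
    (hsup : ∀ v : H, Tendsto (fun k => (∑ i ∈ Finset.range k, p i) v) atTop (𝓝 v)) :
    (∀ b : H →L[ℂ] H, IsCompactOperator b →
      CauchySeq fun k => (ContinuousLinearMap.adjoint b).comp (∑ i ∈ Finset.range k, p i)) ∧
    ¬ ∃ φ : ℕ → ℕ, StrictMono φ ∧ ∃ l : H →L[ℂ] H, IsCompactOperator l ∧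
      Tendsto (fun j => (((j : ℕ) + 1 : ℝ))⁻¹ •
          ∑ m ∈ Finset.range (j + 1), ∑ i ∈ Finset.range (φ m), p i)
        atTop (𝓝 l) :=
  compact_operators_not_mBS2_general p hrank horth hsup
end

section
/- Let A be a unital C*-algebra and V a countably generated Hilbert A-module. Then for every bounded A-linear functional f ∈ V' = Hom_A(V, A) there exists a sequence {x_n} in V such that ⟨x_n, z⟩ → f(z) in norm for every z ∈ V; i.e. the completion of V with respect to τ_{V̂} coincides with V' extending the canonical embedding x ↦ ⟨x,·⟩. -/
open Filter Topology

/-- A bounded `A`-linear map from a Hilbert C*-module `E` to the C*-algebra `A`,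
an element of the dual module `V' = Hom_A(V, A)`. -/
structure ModuleDual (A E : Type*) [NonUnitalCStarAlgebra A] [NormedAddCommGroup E]
    [NormedSpace ℂ E] [SMul Aᵐᵒᵖ E] where
  toFun : E → A
  map_add' : ∀ x y : E, toFun (x + y) = toFun x + toFun y
  map_op_smul' : ∀ (a : A) (x : E), toFun (MulOpposite.op a • x) = toFun x * a
  bound' : ∃ C : ℝ, ∀ x : E, ‖toFun x‖ ≤ C * ‖x‖

variable {A : Type*} [CStarAlgebra A] [PartialOrder A] [StarOrderedRing A]
variable {E : Type*} [NormedAddCommGroup E] [NormedSpace ℂ E] [SMul Aᵐᵒᵖ E] [CStarModuleOld A E]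

local notation "⟪" x ", " y "⟫" => inner (𝕜 := A) x y

open scoped InnerProductSpace Ring

/-!
The right Hilbert `A`-module `E` is a left Hilbert `Aᵐᵒᵖ`-module in Mathlib's sense, and the
argument is run there. Let `T_n = ∑_{i ≤ n} θ_{g i, g i}` be the truncated frame operator,
`ε_n = 1 / (n + 1)` and `R_n = (T_n + ε_n)⁻¹`; the operator `T_n + ε_n` is invertible because
`T_n ≥ 0` (along `t ↦ t T_n + ε_n`, `t ∈ [0, 1]`, all inverses have norm at most `ε_n⁻¹`, so
invertibility propagates in steps of length `< ε_n / ‖T_n‖`). The element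
`x_n = ∑_{i ≤ n} f(g i)^* · R_n (g i)` satisfies `⟪x_n, z⟫ = f (T_n R_n z)`. As
`‖T_n R_n z‖ ≤ ‖z‖`, the `x_n` are bounded by `‖f‖`; as `θ_{g j, g j} ≤ T_n` for `j ≤ n`,
`‖g j - T_n R_n (g j)‖ = ‖ε_n R_n (g j)‖ ≤ √ε_n`. Hence `⟪x_n, z⟫ → f z` on the generators,
on their span, and, by equicontinuity of the bounded family `⟪x_n, ·⟫`, on its closure.
-/

namespace ContinuousLinearMap

variable {W : Type*} [NormedAddCommGroup W] [NormedSpace ℂ W]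

theorem apply_inverse_apply {S : W →L[ℂ] W} (hS : IsUnit S) (w : W) : S (S⁻¹ʳ w) = w :=
  DFunLike.congr_fun (Ring.mul_inverse_cancel S hS) w

theorem norm_inv_le_of_mul_norm_le (U : (W →L[ℂ] W)ˣ) {c : ℝ} (hc : 0 < c)
    (h : ∀ u, c * ‖u‖ ≤ ‖U.val u‖) : ‖(↑U⁻¹ : W →L[ℂ] W)‖ ≤ c⁻¹ := by
  refine opNorm_le_bound _ (inv_nonneg.mpr hc.le) fun w => ?_
  rw [le_inv_mul_iff₀ hc]
  simpa [show U.val (U⁻¹.val w) = w from DFunLike.congr_fun U.mul_inv w] using h (U⁻¹.val w)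

end ContinuousLinearMap

namespace CStarModule

variable {B V : Type*} [NonUnitalCStarAlgebra B] [PartialOrder B]
  [NormedAddCommGroup V] [NormedSpace ℂ V] [SMul B V] [CStarModule B V]

variable (B) in
theorem ext_inner_left {u v : V} (h : ∀ w, ⟪w, u⟫_B = ⟪w, v⟫_B) : u = v := by
  rw [← sub_eq_zero, ← inner_self (A := B), inner_sub_right, h, sub_self]

protected theorem add_smul (b b' : B) (y : V) : (b + b') • y = b • y + b' • y :=
  ext_inner_left B fun w => by simp [add_mul]

protected theorem smul_assoc (c : ℂ) (b : B) (y : V) : (c • b) • y = c • b • y :=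
  ext_inner_left B fun w => by simp [smul_mul_assoc]

protected theorem norm_smul_le (b : B) (y : V) : ‖b • y‖ ≤ ‖b‖ * ‖y‖ := by
  refine (pow_le_pow_iff_left₀ (norm_nonneg _) (by positivity) two_ne_zero).mp ?_
  calc ‖b • y‖ ^ 2 = ‖b * (⟪y, y⟫_B * star b)‖ := by simp [norm_sq_eq B]
    _ ≤ ‖b‖ * (‖⟪y, y⟫_B‖ * ‖star b‖) := norm_mul_le_of_le le_rfl (norm_mul_le _ _)
    _ = (‖b‖ * ‖y‖) ^ 2 := by rw [norm_star, ← norm_sq_eq B]; ring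

theorem inner_inverse_left {S : V →L[ℂ] V} (hS : IsUnit S)
    (hS_symm : ∀ u v, ⟪S u, v⟫_B = ⟪u, S v⟫_B) (u v : V) :
    ⟪S⁻¹ʳ u, v⟫_B = ⟪u, S⁻¹ʳ v⟫_B := by
  conv_lhs => rw [← S.apply_inverse_apply hS v]
  rw [← hS_symm, S.apply_inverse_apply hS]

variable [StarOrderedRing B]

theorem norm_le_norm_of_inner_self_le {x y : V} (h : ⟪x, x⟫_B ≤ ⟪y, y⟫_B) : ‖x‖ ≤ ‖y‖ := by
  refine (pow_le_pow_iff_left₀ (norm_nonneg _) (norm_nonneg _) two_ne_zero).mp ?_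
  rw [norm_sq_eq B, norm_sq_eq B]
  exact CStarAlgebra.norm_le_norm_of_nonneg_of_le inner_self_nonneg h

variable (B) in
noncomputable def rankOne (y : V) : V →L[ℂ] V :=
  LinearMap.mkContinuous
    { toFun := fun z => ⟪y, z⟫_B • y
      map_add' := fun u v => by rw [inner_add_right, CStarModule.add_smul]
      map_smul' := fun c u => by rw [inner_smul_right_complex, CStarModule.smul_assoc]; rfl }
    (‖y‖ * ‖y‖)
    fun z => calc ‖⟪y, z⟫_B • y‖ ≤ ‖⟪y, z⟫_B‖ * ‖y‖ := CStarModule.norm_smul_le _ _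
      _ ≤ ‖y‖ * ‖z‖ * ‖y‖ := by gcongr; exact norm_inner_le V
      _ = ‖y‖ * ‖y‖ * ‖z‖ := by ring

@[simp]
theorem rankOne_apply (y z : V) : rankOne B y z = ⟪y, z⟫_B • y := rfl

theorem inner_rankOne_left (y u v : V) : ⟪rankOne B y u, v⟫_B = ⟪u, rankOne B y v⟫_B := by
  simp

theorem inner_rankOne_self_nonneg (y v : V) : 0 ≤ ⟪v, rankOne B y v⟫_B := by
  simpa [inner_op_smul_right] using star_mul_self_nonneg ⟪v, y⟫_B

theorem mul_norm_le_norm_add_smul {T : V →L[ℂ] V} (hT : ∀ u, 0 ≤ ⟪u, T u⟫_B) {ε : ℝ}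
    (hε : 0 ≤ ε) (u : V) : ε * ‖u‖ ≤ ‖T u + ε • u‖ := by
  rcases (norm_nonneg u).eq_or_lt with hu | hu
  · simp [← hu]
  refine le_of_mul_le_mul_left ?_ hu
  calc ‖u‖ * (ε * ‖u‖) = ‖ε • ⟪u, u⟫_B‖ := by
        rw [norm_smul, ← norm_sq_eq B, Real.norm_of_nonneg hε]; ring
    _ ≤ ‖⟪u, T u + ε • u⟫_B‖ := by
        refine CStarAlgebra.norm_le_norm_of_nonneg_of_le (smul_nonneg hε inner_self_nonneg) ?_
        rw [inner_add_right, inner_smul_right_real]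
        exact le_add_of_nonneg_left (hT u)
    _ ≤ ‖u‖ * ‖T u + ε • u‖ := norm_inner_le V

theorem norm_apply_le_norm_apply_add_smul {T : V →L[ℂ] V} (hT_symm : ∀ u v, ⟪T u, v⟫_B = ⟪u, T v⟫_B)
    (hT : ∀ u, 0 ≤ ⟪u, T u⟫_B) {ε : ℝ} (hε : 0 ≤ ε) (u : V) : ‖T u‖ ≤ ‖T u + ε • u‖ := by
  refine norm_le_norm_of_inner_self_le (B := B) ?_
  have : ⟪T u + ε • u, T u + ε • u⟫_B
      = ⟪T u, T u⟫_B + ((2 * ε) • ⟪u, T u⟫_B + (ε * ε) • ⟪u, u⟫_B) := by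
    simp only [inner_add_left, inner_add_right, inner_smul_left_real, inner_smul_right_real,
      hT_symm]
    module
  rw [this]
  exact le_add_of_nonneg_right <| add_nonneg (smul_nonneg (by positivity) (hT u))
    (smul_nonneg (by positivity) inner_self_nonneg)

theorem isUnit_add_smul_one [CompleteSpace V] {T : V →L[ℂ] V} (hT : ∀ u, 0 ≤ ⟪u, T u⟫_B)
    {ε : ℝ} (hε : 0 < ε) : IsUnit (T + ε • (1 : V →L[ℂ] V)) := by
  nontriviality V
  obtain ⟨N, hN⟩ := exists_nat_gt (‖T‖ / ε)
  rw [div_lt_iff₀ hε] at hN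
  have hN0 : (0 : ℝ) < N := pos_of_mul_pos_left ((norm_nonneg T).trans_lt hN) hε.le
  suffices ∀ k : ℕ, IsUnit (((k : ℝ) / N) • T + ε • (1 : V →L[ℂ] V)) by
    simpa [hN0.ne'] using this N
  intro k
  induction k with
  | zero =>
    have := isUnit_one.smul (Units.mk0 ε hε.ne') (M := V →L[ℂ] V)
    rw [Units.smul_def, Units.val_mk0] at this
    simpa using this
  | succ k ih =>
    obtain ⟨U, hU⟩ := ih
    have hinv : ‖(↑U⁻¹ : V →L[ℂ] V)‖ ≤ ε⁻¹ := by
      refine ContinuousLinearMap.norm_inv_le_of_mul_norm_le U hε fun u => ?_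
      rw [hU]
      have hkT : ∀ v, 0 ≤ ⟪v, (((k : ℝ) / N) • T) v⟫_B := fun v => by
        rw [smul_apply, inner_smul_right_real]
        exact smul_nonneg (by positivity) (hT v)
      simpa using mul_norm_le_norm_add_smul hkT hε.le u
    refine ⟨U.ofNearby _ ?_, rfl⟩
    calc ‖((k + 1 : ℕ) / N : ℝ) • T + ε • 1 - U‖ = ‖T‖ / N := by
          rw [hU, add_sub_add_right_eq_sub, ← sub_smul, norm_smul]
          push_cast
          rw [← sub_div, add_sub_cancel_left, norm_div, norm_one, Real.norm_natCast,
            one_div_mul_eq_div]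
      _ < ε := by rwa [div_lt_iff₀ hN0, mul_comm]
      _ ≤ ‖(↑U⁻¹ : V →L[ℂ] V)‖⁻¹ := (le_inv_comm₀ hε (Units.norm_pos U⁻¹)).mpr hinv

theorem norm_smul_le_sqrt_of_rankOne_le {T : V →L[ℂ] V} {y u : V} {ε : ℝ} (hε : 0 < ε)
    (hyT : ∀ v, ⟪v, rankOne B y v⟫_B ≤ ⟪v, T v⟫_B) (hu : T u + ε • u = y) :
    ‖ε • u‖ ≤ √ε := by
  have hw : ⟪u, y⟫_B = ⟪u, T u⟫_B + ε • ⟪u, u⟫_B := by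
    rw [← hu, inner_add_right, inner_smul_right_real]
  set w := ⟪u, y⟫_B
  -- `θ_y ≤ T` gives `w^* w ≤ ⟪u, T u⟫ ≤ w`, whence `‖w‖ ≤ 1`, and `ε ⟪u, u⟫ ≤ w`.
  have hθ : star w * w ≤ ⟪u, T u⟫_B := by simpa [w] using hyT u
  have hεw : ε • ⟪u, u⟫_B ≤ w :=
    hw ▸ le_add_of_nonneg_left ((star_mul_self_nonneg w).trans hθ)
  have hw_le_one : ‖w‖ ≤ 1 := by
    have : ‖w‖ * ‖w‖ ≤ ‖w‖ := by
      rw [← CStarRing.norm_star_mul_self]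
      exact CStarAlgebra.norm_le_norm_of_nonneg_of_le (star_mul_self_nonneg w) <|
        hθ.trans (hw ▸ le_add_of_nonneg_right (smul_nonneg hε.le inner_self_nonneg))
    nlinarith [norm_nonneg w]
  have : ε * ‖u‖ ^ 2 ≤ 1 := by
    calc ε * ‖u‖ ^ 2 = ‖ε • ⟪u, u⟫_B‖ := by
          rw [norm_smul, ← norm_sq_eq B, Real.norm_of_nonneg hε.le]
      _ ≤ ‖w‖ := CStarAlgebra.norm_le_norm_of_nonneg_of_le (smul_nonneg hε.le inner_self_nonneg) hεw
      _ ≤ 1 := hw_le_one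
  rw [Real.le_sqrt (norm_nonneg _) hε.le, norm_smul, Real.norm_of_nonneg hε.le]
  nlinarith

variable (B) in
noncomputable def frameOp (g : ℕ → V) (n : ℕ) : V →L[ℂ] V :=
  ∑ i ∈ Finset.range (n + 1), rankOne B (g i)

theorem frameOp_apply (g : ℕ → V) (n : ℕ) (z : V) :
    frameOp B g n z = ∑ i ∈ Finset.range (n + 1), ⟪g i, z⟫_B • g i := by
  simp [frameOp]

theorem inner_frameOp_left (g : ℕ → V) (n : ℕ) (u v : V) :
    ⟪frameOp B g n u, v⟫_B = ⟪u, frameOp B g n v⟫_B := by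
  simp only [frameOp, sum_apply, inner_sum_left, inner_sum_right, inner_rankOne_left]

theorem inner_rankOne_le_inner_frameOp (g : ℕ → V) {n j : ℕ} (hj : j ≤ n) (v : V) :
    ⟪v, rankOne B (g j) v⟫_B ≤ ⟪v, frameOp B g n v⟫_B := by
  rw [frameOp, sum_apply, inner_sum_right]
  exact Finset.single_le_sum (fun i _ => inner_rankOne_self_nonneg (g i) v)
    (Finset.mem_range_succ_iff.mpr hj)

theorem inner_frameOp_self_nonneg (g : ℕ → V) (n : ℕ) (v : V) : 0 ≤ ⟪v, frameOp B g n v⟫_B :=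
  (inner_rankOne_self_nonneg (g 0) v).trans (inner_rankOne_le_inner_frameOp g n.zero_le v)

variable (B) in
noncomputable def frameResolvent (g : ℕ → V) (n : ℕ) : V →L[ℂ] V :=
  (frameOp B g n + (1 / ((n : ℝ) + 1)) • (1 : V →L[ℂ] V))⁻¹ʳ

section Resolvent

variable [CompleteSpace V] (g : ℕ → V) (n : ℕ)

theorem isUnit_frameOp_add_smul_one :
    IsUnit (frameOp B g n + (1 / ((n : ℝ) + 1)) • (1 : V →L[ℂ] V)) :=
  isUnit_add_smul_one (inner_frameOp_self_nonneg g n) (by positivity)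

theorem frameOp_frameResolvent_add (z : V) :
    frameOp B g n (frameResolvent B g n z) + (1 / ((n : ℝ) + 1)) • frameResolvent B g n z = z := by
  simpa [frameResolvent] using
    (frameOp B g n + _).apply_inverse_apply (isUnit_frameOp_add_smul_one g n) z

theorem inner_frameResolvent_left (u v : V) :
    ⟪frameResolvent B g n u, v⟫_B = ⟪u, frameResolvent B g n v⟫_B :=
  inner_inverse_left (isUnit_frameOp_add_smul_one g n)
    (fun u v => by simp [inner_frameOp_left]) u v

end Resolvent

noncomputable def frameApprox (φ : V →L[ℂ] B) (g : ℕ → V) (n : ℕ) : V :=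
  ∑ i ∈ Finset.range (n + 1), star (φ (g i)) • frameResolvent B g n (g i)

section Approx

variable [CompleteSpace V] {φ : V →L[ℂ] B} (g : ℕ → V)

theorem inner_frameApprox (hφ : ∀ (b : B) x, φ (b • x) = b * φ x) (n : ℕ) (z : V) :
    ⟪frameApprox φ g n, z⟫_B = φ (frameOp B g n (frameResolvent B g n z)) := by
  simp [frameApprox, inner_sum_left, inner_frameResolvent_left, frameOp_apply, hφ]

theorem norm_frameApprox_le (hφ : ∀ (b : B) x, φ (b • x) = b * φ x) (n : ℕ) :
    ‖frameApprox φ g n‖ ≤ ‖φ‖ := by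
  set x := frameApprox φ g n
  have : ‖x‖ ^ 2 ≤ ‖φ‖ * ‖x‖ :=
    calc ‖x‖ ^ 2 = ‖φ (frameOp B g n (frameResolvent B g n x))‖ := by
          rw [norm_sq_eq B, inner_frameApprox g hφ]
      _ ≤ ‖φ‖ * ‖frameOp B g n (frameResolvent B g n x)‖ := φ.le_opNorm _
      _ ≤ ‖φ‖ * ‖x‖ := by
          gcongr
          conv_rhs => rw [← frameOp_frameResolvent_add (B := B) g n x]
          exact norm_apply_le_norm_apply_add_smul (inner_frameOp_left g n)
            (inner_frameOp_self_nonneg g n) (by positivity) _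
  nlinarith [norm_nonneg x, norm_nonneg φ]

theorem norm_inner_frameApprox_sub_le (hφ : ∀ (b : B) x, φ (b • x) = b * φ x) {n j : ℕ}
    (hj : j ≤ n) : ‖⟪frameApprox φ g n, g j⟫_B - φ (g j)‖ ≤ ‖φ‖ * √(1 / ((n : ℝ) + 1)) := by
  set u := frameResolvent B g n (g j)
  have hu := frameOp_frameResolvent_add (B := B) g n (g j)
  have : ⟪frameApprox φ g n, g j⟫_B - φ (g j) = -φ ((1 / ((n : ℝ) + 1)) • u) := by
    rw [inner_frameApprox g hφ, ← map_sub, ← map_neg]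
    congr 1
    rw [eq_neg_iff_add_eq_zero, sub_add_eq_add_sub, hu, sub_self]
  rw [this, norm_neg]
  exact (φ.le_opNorm _).trans <| by
    gcongr
    exact norm_smul_le_sqrt_of_rankOne_le (by positivity) (inner_rankOne_le_inner_frameOp g hj) hu

theorem tendsto_inner_frameApprox_smul (hφ : ∀ (b : B) x, φ (b • x) = b * φ x) (b : B) (j : ℕ) :
    Tendsto (fun n => ⟪frameApprox φ g n, b • g j⟫_B) atTop (𝓝 (φ (b • g j))) := by
  have hbound : Tendsto (fun n : ℕ => ‖φ‖ * √(1 / ((n : ℝ) + 1))) atTop (𝓝 0) := by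
    simpa using ((Real.continuous_sqrt.tendsto 0).comp
      tendsto_one_div_add_atTop_nhds_zero_nat).const_mul ‖φ‖
  have hgen : Tendsto (fun n => ⟪frameApprox φ g n, g j⟫_B) atTop (𝓝 (φ (g j))) := by
    rw [tendsto_iff_norm_sub_tendsto_zero]
    refine squeeze_zero' (.of_forall fun _ => norm_nonneg _) ?_ hbound
    filter_upwards [eventually_ge_atTop j] with n hn
    exact norm_inner_frameApprox_sub_le g hφ hn
  simpa [hφ] using hgen.const_mul b

end Approx

theorem isClosed_setOf_tendsto_inner {ι : Type*} {l : Filter ι} {x : ι → V} {C : ℝ}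
    (hx : ∀ i, ‖x i‖ ≤ C) (φ : V →L[ℂ] B) :
    IsClosed {z | Tendsto (fun i => ⟪x i, z⟫_B) l (𝓝 (φ z))} := by
  have hequi := (NormedSpace.equicontinuous_TFAE fun i => innerSL (A := B) (x i)).out 3 1
  exact (hequi.mp ⟨C, fun i z => (norm_inner_le V).trans (by gcongr; exact hx i)⟩)
    |>.isClosed_setOfPred_tendsto φ.continuous

theorem tendsto_inner_of_dense_span {ι : Type*} {l : Filter ι} {x : ι → V} {C : ℝ}
    (hx : ∀ i, ‖x i‖ ≤ C) (φ : V →L[ℂ] B) {S : Set V} (hS : Dense (Submodule.span ℂ S : Set V))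
    (hxS : ∀ z ∈ S, Tendsto (fun i => ⟪x i, z⟫_B) l (𝓝 (φ z))) (z : V) :
    Tendsto (fun i => ⟪x i, z⟫_B) l (𝓝 (φ z)) := by
  let P : Submodule ℂ V :=
    { carrier := {z | Tendsto (fun i => ⟪x i, z⟫_B) l (𝓝 (φ z))}
      add_mem' := fun {u v} hu hv => by simpa using hu.add hv
      zero_mem' := by simpa using tendsto_const_nhds
      smul_mem' := fun c u hu => by simpa using hu.const_smul c }
  have hspan : (Submodule.span ℂ S : Set V) ⊆ P := Submodule.span_le.mpr hxS
  have hP : closure (Submodule.span ℂ S : Set V) ⊆ P :=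
    (isClosed_setOf_tendsto_inner hx φ).closure_subset_iff.mpr hspan
  exact hP (hS.closure_eq ▸ Set.mem_univ z)

theorem exists_tendsto_inner_of_dense_span [CompleteSpace V] (g : ℕ → V)
    (hg : Dense (Submodule.span ℂ {y : V | ∃ (i : ℕ) (b : B), y = b • g i} : Set V))
    (φ : V →L[ℂ] B) (hφ : ∀ (b : B) x, φ (b • x) = b * φ x) :
    ∃ x : ℕ → V, ∀ z, Tendsto (fun n => ⟪x n, z⟫_B) atTop (𝓝 (φ z)) := by
  refine ⟨frameApprox φ g, tendsto_inner_of_dense_span (norm_frameApprox_le g hφ) φ hg ?_⟩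
  rintro _ ⟨i, b, rfl⟩
  exact tendsto_inner_frameApprox_smul g hφ b i

end CStarModule

instance CStarModuleOld.toCStarModuleMulOpposite {A E : Type*} [NonUnitalCStarAlgebra A]
    [PartialOrder A] [NormedAddCommGroup E] [NormedSpace ℂ E] [SMul Aᵐᵒᵖ E]
    [CStarModuleOld A E] : CStarModule Aᵐᵒᵖ E where
  inner x y := MulOpposite.op (inner (𝕜 := A) x y)
  inner_add_right := congrArg MulOpposite.op CStarModuleOld.inner_add_right
  inner_self_nonneg := MulOpposite.op_nonneg.mpr CStarModuleOld.inner_self_nonneg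
  inner_self := by simp [CStarModuleOld.inner_self]
  inner_op_smul_right := by simp [CStarModuleOld.inner_op_smul_right]
  inner_smul_right_complex := by simp [CStarModuleOld.inner_smul_right_complex]
  star_inner x y := congrArg MulOpposite.op (CStarModuleOld.star_inner x y)
  norm_eq_sqrt_norm_inner_self x := CStarModuleOld.norm_eq_sqrt_norm_inner_self (A := A) x

namespace ModuleDual

variable {A E : Type*} [CStarAlgebra A] [PartialOrder A] [NormedAddCommGroup E] [NormedSpace ℂ E]
  [SMul Aᵐᵒᵖ E] [CStarModuleOld A E]

theorem map_smul (f : ModuleDual A E) (c : ℂ) (x : E) : f.toFun (c • x) = c • f.toFun x := by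
  have : c • x = MulOpposite.op (c • 1 : A) • x :=
    CStarModule.ext_inner_left Aᵐᵒᵖ fun w => by simp
  rw [this, f.map_op_smul', mul_smul_comm, mul_one]

noncomputable def toOpCLM (f : ModuleDual A E) : E →L[ℂ] Aᵐᵒᵖ :=
  LinearMap.mkContinuousOfExistsBound
    { toFun := fun x => MulOpposite.op (f.toFun x)
      map_add' := fun x y => by simp [f.map_add']
      map_smul' := fun c x => by simp [f.map_smul] }
    f.bound'

theorem toOpCLM_map_smul (f : ModuleDual A E) (b : Aᵐᵒᵖ) (x : E) :
    f.toOpCLM (b • x) = b * f.toOpCLM x := by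
  simpa [toOpCLM] using congrArg MulOpposite.op (f.map_op_smul' b.unop x)

end ModuleDual

/-- Let `A` be a unital C*-algebra and `E` a countably generated Hilbert `A`-module. Then
every bounded `A`-linear functional `f : E → A` is the `τ_V̂`-limit of a sequence from `E`:
there is `{x n}` in `E` with `⟪x n, z⟫ → f z` in norm for every `z`. Hence the
`τ_V̂`-completion of `E` coincides with the dual module `E'`, extending the canonical
embedding `x ↦ ⟪x, ·⟫`. -/
theorem tauHat_completion_eq_dual [CompleteSpace E] (g : ℕ → E)
    (hg : Dense (Submodule.span ℂ
      {y : E | ∃ (i : ℕ) (a : A), y = MulOpposite.op a • g i} : Set E))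
    (f : ModuleDual A E) :
    ∃ x : ℕ → E, ∀ z : E, Tendsto (fun n => ⟪x n, z⟫) atTop (𝓝 (f.toFun z)) := by
  obtain ⟨x, hx⟩ := CStarModule.exists_tendsto_inner_of_dense_span g
    (by simpa only [MulOpposite.op_surjective.exists] using hg) f.toOpCLM f.toOpCLM_map_smul
  exact ⟨x, fun z => (MulOpposite.continuous_unop.tendsto _).comp (hx z)⟩
end

section
/- Let V be a countably generated self-dual Hilbert module over a unital C*-algebra A. Then V has property (mBS2): every τ_{V̂}-convergent sequence in V admits a subsequence with norm-convergent Cesàro means. -/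
/-!
Self-duality turns the limit functional `z ↦ lim ⟪x n, z⟫`, bounded by the uniform boundedness
principle, into `⟪w, ·⟫`, so `y n = x n - w` is `τ`-null and bounded. Choosing inductively a
subsequence with `‖⟪y (φ i), y (φ j)⟫‖ ≤ 2⁻ⁱ` for `i < j` makes it almost orthogonal:
`‖∑_{i<N} y (φ i)‖² ≤ N (M² + 4)`, so its Cesàro means are `O(N^{-1/2})` and those of
`x ∘ φ` converge to `w`.
-/

open Filter Topology

/-- The December 2024 Mathlib notion of a Hilbert C*-module: a right `A`-module
(via `Aᵐᵒᵖ`) with an `A`-valued inner product linear in the second argument. -/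
class CStarModule' (A : outParam <| Type*) (E : Type*) [NonUnitalSemiring A] [StarRing A]
    [Module ℂ A] [AddCommGroup E] [Module ℂ E] [PartialOrder A] [SMul Aᵐᵒᵖ E] [Norm A] [Norm E]
    extends Inner A E where
  inner_add_right {x} {y} {z} : inner x (y + z) = inner x y + inner x z
  inner_self_nonneg {x} : 0 ≤ inner x x
  inner_self {x} : inner x x = 0 ↔ x = 0
  inner_op_smul_right {a : A} {x y : E} : inner x (MulOpposite.op a • y) = inner x y * a
  inner_smul_right_complex {z : ℂ} {x} {y} : inner x (z • y) = z • inner x y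
  star_inner x y : star (inner x y) = inner y x
  norm_eq_sqrt_norm_inner_self x : ‖x‖ = √‖inner x x‖

variable {A : Type*} [CStarAlgebra A] [PartialOrder A] [StarOrderedRing A]
variable {E : Type*} [NormedAddCommGroup E] [NormedSpace ℂ E] [SMul Aᵐᵒᵖ E] [CStarModule' A E]

local notation "⟪" x ", " y "⟫" => inner (𝕜 := A) x y

lemma exists_strictMono_forall_lt_of_eventually {r : ℕ → ℕ → Prop}
    (h : ∀ m, ∀ᶠ n in atTop, r m n) :
    ∃ φ : ℕ → ℕ, StrictMono φ ∧ ∀ i j, i < j → r (φ i) (φ j) := by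
  obtain ⟨φ, -, hφ⟩ := exists_seq_of_forall_finset_exists (fun _ => True)
    (fun m n => m < n ∧ r m n) fun s _ => by
      have : ∀ᶠ n in atTop, ∀ m ∈ s, m < n ∧ r m n :=
        (Finset.eventually_all s).2 fun m _ => (eventually_gt_atTop m).and (h m)
      obtain ⟨n, hn⟩ := this.exists
      exact ⟨n, trivial, hn⟩
  exact ⟨φ, fun i j hij => (hφ i j hij).1, fun i j hij => (hφ i j hij).2⟩

lemma sum_range_sum_range_le_of_le_two_inv_pow (a : ℕ → ℕ → ℝ) (c : ℝ) (hdiag : ∀ i, a i i ≤ c)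
    (hlt : ∀ i j, i < j → a i j ≤ 2⁻¹ ^ i) (hsymm : ∀ i j, a i j = a j i) (N : ℕ) :
    ∑ i ∈ Finset.range N, ∑ j ∈ Finset.range N, a i j ≤ N * (c + 4) := by
  set T := ∑ j ∈ Finset.range N, (2⁻¹ : ℝ) ^ j
  have hT : T ≤ 2 := by simpa only [one_div] using sum_geometric_two_le N
  have hbound (i j : ℕ) : a i j ≤ (if i = j then c else 0) + (2⁻¹ ^ i + 2⁻¹ ^ j) := by
    rcases lt_trichotomy i j with h | rfl | h
    · simp only [h.ne, if_false]
      linarith [hlt i j h, pow_nonneg (by norm_num : (0 : ℝ) ≤ 2⁻¹) j]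
    · simp only [if_true]
      linarith [hdiag i, pow_nonneg (by norm_num : (0 : ℝ) ≤ 2⁻¹) i]
    · simp only [h.ne', if_false]
      linarith [hsymm i j, hlt j i h, pow_nonneg (by norm_num : (0 : ℝ) ≤ 2⁻¹) i]
  calc ∑ i ∈ Finset.range N, ∑ j ∈ Finset.range N, a i j
      ≤ ∑ i ∈ Finset.range N, ∑ j ∈ Finset.range N,
          ((if i = j then c else 0) + (2⁻¹ ^ i + 2⁻¹ ^ j)) :=
        Finset.sum_le_sum fun i _ => Finset.sum_le_sum fun j _ => hbound i j
    _ = N * c + N * T + N * T := by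
        simp only [Finset.sum_add_distrib, Finset.sum_ite_eq, Finset.sum_const, Finset.card_range,
          nsmul_eq_mul, ← Finset.mul_sum, T]
        rw [Finset.sum_ite_of_true fun _ hi => hi, Finset.sum_const, Finset.card_range,
          nsmul_eq_mul, add_assoc]
    _ ≤ N * (c + 4) := by nlinarith [(Nat.cast_nonneg N : (0 : ℝ) ≤ N)]

section Cesaro

variable {F : Type*} [NormedAddCommGroup F] [NormedSpace ℝ F]

noncomputable def cesaroMean (u : ℕ → F) (k : ℕ) : F :=
  ((k : ℝ) + 1)⁻¹ • ∑ i ∈ Finset.range (k + 1), u i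

lemma cesaroMean_sub_const (u : ℕ → F) (w : F) (k : ℕ) :
    cesaroMean (fun i => u i - w) k = cesaroMean u k - w := by
  have hk : ((k : ℝ) + 1) ≠ 0 := by positivity
  simp only [cesaroMean, Finset.sum_sub_distrib, Finset.sum_const, Finset.card_range, smul_sub,
    ← Nat.cast_smul_eq_nsmul ℝ, Nat.cast_succ, inv_smul_smul₀ hk]

lemma tendsto_cesaroMean_zero_of_norm_sum_sq_le (u : ℕ → F) (c : ℝ)
    (h : ∀ N, ‖∑ i ∈ Finset.range N, u i‖ ^ 2 ≤ N * c) :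
    Tendsto (cesaroMean u) atTop (𝓝 0) := by
  have hsq (k : ℕ) : ‖cesaroMean u k‖ ^ 2 ≤ c / ((k : ℝ) + 1) := by
    have hk : (0 : ℝ) < (k : ℝ) + 1 := by positivity
    calc ‖cesaroMean u k‖ ^ 2 = ((k : ℝ) + 1)⁻¹ ^ 2 * ‖∑ i ∈ Finset.range (k + 1), u i‖ ^ 2 := by
          rw [cesaroMean, norm_smul, mul_pow, Real.norm_of_nonneg (inv_nonneg.2 hk.le)]
      _ ≤ ((k : ℝ) + 1)⁻¹ ^ 2 * (((k : ℝ) + 1) * c) := by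
          gcongr
          exact_mod_cast h (k + 1)
      _ = c / ((k : ℝ) + 1) := by field_simp
  have hlim : Tendsto (fun k : ℕ => c / ((k : ℝ) + 1)) atTop (𝓝 0) := by
    simpa only [Function.comp_def, Nat.cast_succ] using
      (tendsto_const_div_atTop_nhds_zero_nat c).comp (tendsto_add_atTop_nat 1)
  rw [tendsto_zero_iff_norm_tendsto_zero]
  simpa only [Real.sqrt_sq (norm_nonneg _), Real.sqrt_zero] using
    (squeeze_zero (fun k => by positivity) hsq hlim).sqrt

end Cesaro

namespace CStarModule'

section

variable {B F : Type*} [CStarAlgebra B] [PartialOrder B]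
  [NormedAddCommGroup F] [NormedSpace ℂ F] [SMul Bᵐᵒᵖ F] [CStarModule' B F]

def innerₗ (x : F) : F →ₗ[ℂ] B where
  toFun y := inner B x y
  map_add' _ _ := inner_add_right
  map_smul' _ _ := inner_smul_right_complex

lemma inner_sub_right (x y z : F) : inner B x (y - z) = inner B x y - inner B x z :=
  map_sub (innerₗ x) y z

lemma inner_zero_right (x : F) : inner B x 0 = 0 :=
  map_zero (innerₗ x)

lemma inner_sum_right {ι : Type*} (s : Finset ι) (x : F) (f : ι → F) :
    inner B x (∑ i ∈ s, f i) = ∑ i ∈ s, inner B x (f i) :=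
  map_sum (innerₗ x) f s

lemma inner_zero_left (x : F) : inner B 0 x = 0 := by
  rw [← star_inner, inner_zero_right, star_zero]

lemma inner_sub_left (x y z : F) : inner B (x - y) z = inner B x z - inner B y z := by
  rw [← star_inner, inner_sub_right, star_sub, star_inner, star_inner]

lemma inner_sum_left {ι : Type*} (s : Finset ι) (f : ι → F) (x : F) :
    inner B (∑ i ∈ s, f i) x = ∑ i ∈ s, inner B (f i) x := by
  rw [← star_inner, inner_sum_right, star_sum]
  simp only [star_inner]

lemma inner_smul_right_real (r : ℝ) (x y : F) : inner B x (r • y) = r • inner B x y := by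
  rw [RCLike.real_smul_eq_coe_smul (K := ℂ) r y, inner_smul_right_complex,
    ← RCLike.real_smul_eq_coe_smul (K := ℂ) r]

lemma inner_smul_left_real (r : ℝ) (x y : F) : inner B (r • x) y = r • inner B x y := by
  rw [← star_inner, inner_smul_right_real, star_smul, star_trivial, star_inner]

lemma inner_op_smul_left (a : B) (x y : F) :
    inner B (MulOpposite.op a • x) y = star a * inner B x y := by
  rw [← star_inner, inner_op_smul_right, star_mul, star_inner]

lemma norm_inner_comm (x y : F) : ‖inner B x y‖ = ‖inner B y x‖ := by
  rw [← star_inner, norm_star]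

lemma norm_sq_eq (x : F) : ‖x‖ ^ 2 = ‖inner B x x‖ := by
  rw [norm_eq_sqrt_norm_inner_self (A := B) x, Real.sq_sqrt (norm_nonneg _)]

lemma norm_sum_range_sq_le {u : ℕ → F} {M : ℝ} (hM : ∀ i, ‖u i‖ ≤ M)
    (hu : ∀ i j, i < j → ‖inner B (u i) (u j)‖ ≤ 2⁻¹ ^ i) (N : ℕ) :
    ‖∑ i ∈ Finset.range N, u i‖ ^ 2 ≤ N * (M ^ 2 + 4) :=
  calc ‖∑ i ∈ Finset.range N, u i‖ ^ 2
      = ‖∑ i ∈ Finset.range N, ∑ j ∈ Finset.range N, inner B (u i) (u j)‖ := by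
        rw [norm_sq_eq, inner_sum_left]
        simp only [inner_sum_right]
    _ ≤ ∑ i ∈ Finset.range N, ∑ j ∈ Finset.range N, ‖inner B (u i) (u j)‖ :=
        (norm_sum_le _ _).trans (Finset.sum_le_sum fun i _ => norm_sum_le _ _)
    _ ≤ N * (M ^ 2 + 4) := by
        refine sum_range_sum_range_le_of_le_two_inv_pow _ _ (fun i => ?_) hu
          (fun i j => norm_inner_comm _ _) N
        rw [← norm_sq_eq]
        exact pow_le_pow_left₀ (norm_nonneg _) (hM i) 2

lemma exists_strictMono_tendsto_cesaroMean_zero {y : ℕ → F} {M : ℝ} (hM : ∀ n, ‖y n‖ ≤ M)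
    (hy : ∀ z, Tendsto (fun n => inner B z (y n)) atTop (𝓝 0)) :
    ∃ φ : ℕ → ℕ, StrictMono φ ∧ Tendsto (cesaroMean fun i => y (φ i)) atTop (𝓝 0) := by
  obtain ⟨φ, hφ, hsmall⟩ := exists_strictMono_forall_lt_of_eventually
    (r := fun m n => ‖inner B (y m) (y n)‖ ≤ 2⁻¹ ^ m) fun m =>
      (hy (y m)).norm.eventually_le_const (by rw [norm_zero]; positivity)
  refine ⟨φ, hφ, tendsto_cesaroMean_zero_of_norm_sum_sq_le _ _
    (norm_sum_range_sq_le (fun i => hM (φ i)) fun i j hij => ?_)⟩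
  exact (hsmall i j hij).trans (pow_le_pow_of_le_one (by norm_num) (by norm_num) hφ.le_apply)

end

lemma inner_mul_inner_swap_le (x y : E) : ⟪y, x⟫ * ⟪x, y⟫ ≤ ‖x‖ ^ 2 • ⟪y, y⟫ := by
  rcases eq_or_ne x 0 with rfl | hx
  · simp [inner_zero_right, inner_zero_left]
  -- expand `0 ≤ ⟪x • a - ‖x‖² y, x • a - ‖x‖² y⟫`, bound `a⋆ ⟪x, x⟫ a ≤ ‖x‖² a⋆ a`,
  -- and take `a = ⟪x, y⟫`
  have key (a : A) : (0 : A) ≤ ‖x‖ ^ 2 • (star a * a) - ‖x‖ ^ 2 • (star a * ⟪x, y⟫)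
      - ‖x‖ ^ 2 • (⟪y, x⟫ * a) + ‖x‖ ^ 2 • (‖x‖ ^ 2 • ⟪y, y⟫) :=
    calc (0 : A) ≤ ⟪MulOpposite.op a • x - ‖x‖ ^ 2 • y, MulOpposite.op a • x - ‖x‖ ^ 2 • y⟫ :=
          inner_self_nonneg
      _ = star a * ⟪x, x⟫ * a - ‖x‖ ^ 2 • (star a * ⟪x, y⟫)
          - ‖x‖ ^ 2 • (⟪y, x⟫ * a) + ‖x‖ ^ 2 • (‖x‖ ^ 2 • ⟪y, y⟫) := by
        simp only [inner_sub_left, inner_sub_right, inner_op_smul_left, inner_op_smul_right,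
          inner_smul_left_real, inner_smul_right_real, sub_mul, smul_sub, smul_mul_assoc,
          mul_assoc]
        abel
      _ ≤ ‖x‖ ^ 2 • (star a * a) - ‖x‖ ^ 2 • (star a * ⟪x, y⟫)
          - ‖x‖ ^ 2 • (⟪y, x⟫ * a) + ‖x‖ ^ 2 • (‖x‖ ^ 2 • ⟪y, y⟫) := by
        gcongr
        rw [norm_sq_eq]
        exact CStarAlgebra.star_left_conjugate_le_norm_smul (star_inner x x)
  have := key ⟪x, y⟫
  simp only [star_inner, sub_self, zero_sub, le_neg_add_iff_add_le, add_zero] at this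
  rwa [smul_le_smul_iff_of_pos_left (pow_pos (norm_pos_iff.mpr hx) 2)] at this

lemma norm_inner_le (x y : E) : ‖⟪x, y⟫‖ ≤ ‖x‖ * ‖y‖ := by
  have h : ‖⟪x, y⟫‖ ^ 2 ≤ (‖x‖ * ‖y‖) ^ 2 :=
    calc ‖⟪x, y⟫‖ ^ 2 = ‖⟪y, x⟫ * ⟪x, y⟫‖ := by
          rw [← star_inner x y, CStarRing.norm_star_mul_self, pow_two]
      _ ≤ ‖‖x‖ ^ 2 • ⟪y, y⟫‖ := by
          refine CStarAlgebra.norm_le_norm_of_nonneg_of_le ?_ (inner_mul_inner_swap_le x y)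
          rw [← star_inner x y]
          exact star_mul_self_nonneg _
      _ = (‖x‖ * ‖y‖) ^ 2 := by
          rw [norm_smul, Real.norm_of_nonneg (by positivity), ← norm_sq_eq y, mul_pow]
  exact (pow_le_pow_iff_left₀ (norm_nonneg _) (by positivity) two_ne_zero).mp h

noncomputable def innerSL (x : E) : E →L[ℂ] A :=
  (innerₗ x).mkContinuous ‖x‖ (norm_inner_le x)

lemma norm_le_norm_innerSL (x : E) : ‖x‖ ≤ ‖innerSL x‖ := by
  rcases eq_or_ne x 0 with rfl | hx
  · simp
  have : ‖x‖ * ‖x‖ ≤ ‖innerSL x‖ * ‖x‖ := by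
    rw [← sq, norm_sq_eq]
    exact (innerSL x).le_opNorm x
  exact le_of_mul_le_mul_right this (norm_pos_iff.mpr hx)

lemma exists_norm_le_of_bddAbove_norm_inner [CompleteSpace E] {x : ℕ → E}
    (hx : ∀ z, BddAbove (Set.range fun n => ‖⟪z, x n⟫‖)) : ∃ M, ∀ n, ‖x n‖ ≤ M := by
  obtain ⟨M, hM⟩ := banach_steinhaus (g := fun n => innerSL (x n)) fun z => by
    obtain ⟨C, hC⟩ := hx z
    exact ⟨C, fun n => (norm_inner_comm (x n) z).trans_le (hC ⟨n, rfl⟩)⟩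
  exact ⟨M, fun n => (norm_le_norm_innerSL (x n)).trans (hM n)⟩

end CStarModule'

namespace ModuleDual

def ofTendsto (x : ℕ → E) (L : E → A)
    (hL : ∀ z, Tendsto (fun n => ⟪x n, z⟫) atTop (𝓝 (L z))) {M : ℝ} (hM : ∀ n, ‖x n‖ ≤ M) :
    ModuleDual A E where
  toFun := L
  map_add' y z := tendsto_nhds_unique (hL (y + z)) <| by
    simpa only [CStarModule'.inner_add_right] using (hL y).add (hL z)
  map_op_smul' a z := tendsto_nhds_unique (hL (MulOpposite.op a • z)) <| by
    simpa only [CStarModule'.inner_op_smul_right] using (hL z).mul_const a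
  bound' := ⟨M, fun z => le_of_tendsto (hL z).norm <| Eventually.of_forall fun n =>
    (CStarModule'.norm_inner_le _ _).trans (mul_le_mul_of_nonneg_right (hM n) (norm_nonneg z))⟩

end ModuleDual

namespace CStarModule'

lemma exists_tendsto_inner_of_selfDual [CompleteSpace E]
    (hsd : ∀ f : ModuleDual A E, ∃ x : E, ∀ y : E, f.toFun y = ⟪x, y⟫) {x : ℕ → E}
    (hx : ∀ z, CauchySeq fun n => ⟪z, x n⟫) :
    ∃ w, ∀ z, Tendsto (fun n => ⟪z, x n⟫) atTop (𝓝 ⟪z, w⟫) := by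
  choose a ha using fun z => cauchySeq_tendsto_of_complete (hx z)
  have hL (z : E) : Tendsto (fun n => ⟪x n, z⟫) atTop (𝓝 (star (a z))) := by
    simpa only [star_inner] using (ha z).star
  obtain ⟨M, hM⟩ := exists_norm_le_of_bddAbove_norm_inner fun z => (ha z).norm.bddAbove_range
  obtain ⟨w, hw⟩ := hsd (ModuleDual.ofTendsto x _ hL hM)
  refine ⟨w, fun z => ?_⟩
  have hwz : ⟪z, w⟫ = a z := by
    rw [← star_inner, ← star_star (a z)]
    exact congrArg star (hw z).symm
  rw [hwz]
  exact ha z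

end CStarModule'

theorem mBS2_of_selfDual_general [CompleteSpace E]
    (hsd : ∀ f : ModuleDual A E, ∃ x : E, ∀ y : E, f.toFun y = ⟪x, y⟫) :
    ∀ x : ℕ → E, (∀ z : E, CauchySeq fun n => ⟪z, x n⟫) →
      ∃ φ : ℕ → ℕ, StrictMono φ ∧ ∃ l : E,
        Tendsto (fun k => (((k : ℕ) + 1 : ℝ))⁻¹ • ∑ i ∈ Finset.range (k + 1), x (φ i))
          atTop (𝓝 l) := by
  intro x hx
  obtain ⟨w, hw⟩ := CStarModule'.exists_tendsto_inner_of_selfDual hsd hx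
  have hnull (z : E) : Tendsto (fun n => ⟪z, x n - w⟫) atTop (𝓝 0) := by
    simpa only [CStarModule'.inner_sub_right, sub_self] using (hw z).sub_const ⟪z, w⟫
  obtain ⟨M, hM⟩ := CStarModule'.exists_norm_le_of_bddAbove_norm_inner fun z =>
    (hnull z).norm.bddAbove_range
  obtain ⟨φ, hφ, hmean⟩ := CStarModule'.exists_strictMono_tendsto_cesaroMean_zero hM hnull
  refine ⟨φ, hφ, w, ?_⟩
  show Tendsto (cesaroMean fun i => x (φ i)) atTop (𝓝 w)
  simpa only [cesaroMean_sub_const, sub_add_cancel, zero_add] using hmean.add_const w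

/-- A countably generated self-dual Hilbert module `E` over a unital C*-algebra `A` has
property (mBS2): every `τ_V̂`-convergent sequence admits a subsequence whose Cesàro means
converge in norm. -/
theorem mBS2_of_selfDual [CompleteSpace E] (g : ℕ → E)
    (hg : Dense (Submodule.span ℂ
      {y : E | ∃ (i : ℕ) (a : A), y = MulOpposite.op a • g i} : Set E))
    (hsd : ∀ f : ModuleDual A E, ∃ x : E, ∀ y : E, f.toFun y = ⟪x, y⟫) :
    ∀ x : ℕ → E, (∀ z : E, CauchySeq fun n => ⟪z, x n⟫) →
      ∃ φ : ℕ → ℕ, StrictMono φ ∧ ∃ l : E,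
        Tendsto (fun k => (((k : ℕ) + 1 : ℝ))⁻¹ • ∑ i ∈ Finset.range (k + 1), x (φ i))
          atTop (𝓝 l) :=
  mBS2_of_selfDual_general hsd
end
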